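/- arXiv:2201.12359 — 3 statements merged into one kernel-verified Lean document; each statement's English description precedes it below -/
import Mathlib

section
/- Let N ≥ 1 be an integer, p ∈ (0,1), and let d be an integer with 0 ≤ d ≤ N. For a real polynomial q(x), the polynomial K_d(x;p,N) divides p·(x−N)·q(x) + (1−p)·x·q(x−1) in ℝ[x] if and only if q lies in the real linear span of the type-1 exceptional Krawtchouk polynomials {K̂_n^{(1,d)}(·;p,N) : n ∈ ℤ≥0, n ≠ d}. -/
open Polynomial

/-- Pochhammer symbol `(c)_k = c (c+1) ⋯ (c+k−1)`. -/
noncomputable def poch (c : ℝ) (k : ℕ) : ℝ := ∏ i ∈ Finset.range k, (c + i)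

/-- The monic Krawtchouk polynomial
`K_n(x;p,a) = Σ_{j=0}^{n} ((−n)_j (−a+j)_{n−j} / j!) p^{n−j} (−x)_j`,
where `(−x)_j = Π_{i=0}^{j−1} (i − x)` as a polynomial in `x`. -/
noncomputable def kraw (n : ℕ) (p a : ℝ) : Polynomial ℝ :=
  ∑ j ∈ Finset.range (n + 1),
    Polynomial.C (poch (-(n : ℝ)) j * poch (-a + j) (n - j) / (Nat.factorial j) * p ^ (n - j)) *
      ∏ i ∈ Finset.range j, (Polynomial.C (i : ℝ) - Polynomial.X)

/-- The type-1 exceptional Krawtchouk polynomial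
`K̂_n^{(1,d)}(x;p,N) = (K_d(x;p,N) K_n(x+1;p,N) − K_d(x+1;p,N) K_n(x;p,N))/(n−d)`. -/
noncomputable def xkraw1 (d n : ℕ) (p N : ℝ) : Polynomial ℝ :=
  Polynomial.C (1 / ((n : ℝ) - (d : ℝ))) *
    (kraw d p N * (kraw n p N).comp (Polynomial.X + 1) -
      (kraw d p N).comp (Polynomial.X + 1) * kraw n p N)

open Finset

noncomputable def phi (j : ℕ) : Polynomial ℝ := ∏ i ∈ Finset.range j, (C (i : ℝ) - X)

noncomputable def kc (p a : ℝ) (m j : ℕ) : ℝ :=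
  poch (-(m : ℝ)) j * poch (-a + j) (m - j) / (Nat.factorial j) * p ^ (m - j)

lemma kraw_eq_sum (m : ℕ) (p a : ℝ) :
    kraw m p a = ∑ j ∈ Finset.range (m + 1), C (kc p a m j) * phi j := rfl

lemma phi_zero : phi 0 = 1 := by simp [phi]

lemma phi_succ (j : ℕ) : phi (j + 1) = (C (j : ℝ) - X) * phi j := by
  rw [phi, prod_range_succ, mul_comm]; rfl

lemma C_nat_succ (i : ℕ) : (C (((i+1):ℕ):ℝ)) = C ((i:ℕ):ℝ) + 1 := by
  rw [Nat.cast_add, Nat.cast_one, map_add, map_one]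

lemma phi_comp_add_one (j : ℕ) : (phi (j + 1)).comp (X + 1) = (-1 - X) * phi j := by
  have h : phi (j+1) = (C ((0:ℕ):ℝ) - X) * ∏ i ∈ range j, (C (((i+1):ℕ):ℝ) - X) := by
    rw [phi, prod_range_succ']; ring
  rw [h, mul_comp, Polynomial.prod_comp]
  have h1 : ∀ i ∈ range j, ((C (((i+1):ℕ):ℝ) - X)).comp (X + 1) = C ((i:ℕ):ℝ) - X := by
    intro i _
    rw [sub_comp, C_comp, X_comp, C_nat_succ]; ring
  rw [prod_congr rfl h1, sub_comp, C_comp, X_comp, phi, Nat.cast_zero, map_zero]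
  ring

lemma phi_comp_sub_one (j : ℕ) : X * (phi j).comp (X - 1) = -phi (j + 1) := by
  have h : phi (j+1) = (C ((0:ℕ):ℝ) - X) * ∏ i ∈ range j, (C (((i+1):ℕ):ℝ) - X) := by
    rw [phi, prod_range_succ']; ring
  rw [h, phi, Polynomial.prod_comp]
  have h1 : ∀ i ∈ range j, ((C ((i:ℕ):ℝ) - X)).comp (X - 1) = C (((i+1):ℕ):ℝ) - X := by
    intro i _
    rw [sub_comp, C_comp, X_comp, C_nat_succ]; ring
  rw [prod_congr rfl h1, Nat.cast_zero, map_zero]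
  ring

lemma poch_succ (c : ℝ) (k : ℕ) : poch c (k + 1) = poch c k * (c + k) := by
  rw [poch, prod_range_succ]; rfl

lemma poch_succ' (c : ℝ) (k : ℕ) : poch c (k + 1) = c * poch (c + 1) k := by
  rw [poch, prod_range_succ']
  rw [show (∏ i ∈ range k, (c + ↑(i+1))) = ∏ i ∈ range k, (c + 1 + i) from
    prod_congr rfl fun i _ => by push_cast; ring]
  rw [poch]; push_cast; ring

lemma kc_zero (p a : ℝ) {m j : ℕ} (h : m < j) : kc p a m j = 0 := by
  have : poch (-(m : ℝ)) j = 0 := by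
    rw [poch]
    apply prod_eq_zero (Finset.mem_range.2 h)
    simp
  simp [kc, this]

lemma kc_rel (p : ℝ) (N : ℕ) (m k : ℕ) :
    p * ((k : ℝ) + 1) * ((N : ℝ) - k) * kc p N m (k + 1) = ((m : ℝ) - k) * kc p N m k := by
  rcases lt_trichotomy k m with hk | rfl | hk
  · -- k < m
    obtain ⟨t, ht⟩ : ∃ t, m - k = t + 1 := ⟨m - k - 1, by omega⟩
    have hmk1 : m - (k + 1) = t := by omega
    have hfac : (Nat.factorial (k+1) : ℝ) = (k+1) * Nat.factorial k := by
      push_cast [Nat.factorial_succ]; ring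
    have hfk : (Nat.factorial k : ℝ) ≠ 0 := Nat.cast_ne_zero.2 (Nat.factorial_ne_zero k)
    have hp1 : poch (-(m:ℝ)) (k+1) = poch (-(m:ℝ)) k * (-(m:ℝ) + k) := poch_succ _ _
    have hp2 : poch (-(N:ℝ) + k) (m - k) = (-(N:ℝ) + k) * poch (-(N:ℝ) + (k+1)) t := by
      rw [ht, poch_succ']
      congr 2
      push_cast; ring
    rw [kc, kc, hp1, hmk1, hp2, ht, hfac]
    have : (-(N:ℝ) + ((k:ℝ)+1)) = (-(N:ℝ) + (((k+1):ℕ):ℝ)) := by push_cast; ring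
    rw [show (-(N:ℝ) + (((k+1):ℕ):ℝ)) = -(N:ℝ) + (k+1) by push_cast; ring]
    field_simp
    ring
  · -- k = m
    have h1 : kc p (N:ℝ) k (k + 1) = 0 := kc_zero p (N:ℝ) (by omega)
    rw [h1]; ring_nf
  · -- m < k
    rw [kc_zero p N hk, kc_zero p N (by omega : m < k + 1)]
    ring

section Struct
variable (p : ℝ) (N : ℕ)

lemma Dphi (j : ℕ) :
    C p * (X - C (N:ℝ)) * (phi (j+1)).comp (X+1) - C (1-p) * X * (phi (j+1)).comp (X-1)
      = (C (2*p-1) * X + C (((j:ℝ)+1) - p*N)) * phi (j+1) + C (p*((j:ℝ)+1)*((N:ℝ)-j)) * phi j := by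
  have h2 : C (1-p) * X * (phi (j+1)).comp (X-1) = C (1-p) * -phi (j+2) := by
    rw [← phi_comp_sub_one]; ring
  rw [phi_comp_add_one, h2, show j+2 = (j+1)+1 from rfl, phi_succ (j+1), phi_succ j]
  push_cast
  simp only [map_sub, map_add, map_mul, map_one, map_ofNat]
  ring

lemma Dphi_zero :
    C p * (X - C (N:ℝ)) * (phi 0).comp (X+1) - C (1-p) * X * (phi 0).comp (X-1)
      = (C (2*p-1) * X + C ((0:ℝ) - p*N)) * phi 0 := by
  rw [phi_zero]
  simp only [one_comp, map_sub, map_mul, map_one, map_ofNat, map_zero]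
  ring

lemma struct (m : ℕ) :
    C p * (X - C (N:ℝ)) * (kraw m p N).comp (X+1) - C (1-p) * X * (kraw m p N).comp (X-1)
      = (C (2*p-1) * X + C ((m:ℝ) - p*N)) * kraw m p N := by
  have hk : (∑ j ∈ Finset.range (m+2), C (kc p N m j) * phi j) = kraw m p N := by
    rw [Finset.sum_range_succ (fun j => C (kc p N m j) * phi j) (m+1),
      kc_zero p (N:ℝ) (by omega : m < m+1), kraw_eq_sum]
    simp
  rw [← hk]
  rw [Polynomial.sum_comp, Polynomial.sum_comp, Finset.mul_sum, Finset.mul_sum, Finset.mul_sum,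
    ← Finset.sum_sub_distrib]
  have hterm : ∀ j ∈ Finset.range (m+2),
      (C p * (X - C (N:ℝ)) * (C (kc p N m j) * phi j).comp (X+1) -
        C (1-p) * X * (C (kc p N m j) * phi j).comp (X-1))
      = C (kc p N m j) *
          (C p * (X - C (N:ℝ)) * (phi j).comp (X+1) - C (1-p) * X * (phi j).comp (X-1)) := by
    intro j _
    rw [mul_comp, C_comp, mul_comp, C_comp]
    ring
  rw [Finset.sum_congr rfl hterm]
  -- peel off j = 0
  rw [Finset.sum_range_succ' (fun j => C (kc p N m j) *
      (C p * (X - C (N:ℝ)) * (phi j).comp (X+1) - C (1-p) * X * (phi j).comp (X-1))) (m+1)]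
  rw [Dphi_zero p N]
  have hDj : ∀ j ∈ Finset.range (m+1),
      C (kc p N m (j+1)) *
        (C p * (X - C (N:ℝ)) * (phi (j+1)).comp (X+1) - C (1-p) * X * (phi (j+1)).comp (X-1))
      = C (kc p N m (j+1)) * ((C (2*p-1) * X + C (((j:ℝ)+1) - p*N)) * phi (j+1))
        + C (kc p N m (j+1)) * (C (p*((j:ℝ)+1)*((N:ℝ)-j)) * phi j) := by
    intro j _
    rw [Dphi p N j, mul_add]
  rw [Finset.sum_congr rfl hDj, Finset.sum_add_distrib]
  -- second sum : use kc_rel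
  have hrel : ∀ j ∈ Finset.range (m+1),
      C (kc p N m (j+1)) * (C (p*((j:ℝ)+1)*((N:ℝ)-j)) * phi j)
        = C (((m:ℝ) - j) * kc p N m j) * phi j := by
    intro j _
    rw [← mul_assoc, ← map_mul]
    congr 2
    rw [show kc p N m (j+1) * (p*((j:ℝ)+1)*((N:ℝ)-j))
        = p * ((j:ℝ)+1) * ((N:ℝ)-j) * kc p N m (j+1) from by ring]
    rw [kc_rel p N m j]
  rw [Finset.sum_congr rfl hrel]
  -- first sum : un-peel to range (m+2)
  have hfirst : (∑ j ∈ Finset.range (m+1),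
        C (kc p N m (j+1)) * ((C (2*p-1) * X + C (((j:ℝ)+1) - p*N)) * phi (j+1)))
      + C (kc p N m 0) * ((C (2*p-1) * X + C ((0:ℝ) - p*N)) * phi 0)
      = ∑ j ∈ Finset.range (m+2),
          C (kc p N m j) * ((C (2*p-1) * X + C ((j:ℝ) - p*N)) * phi j) := by
    rw [Finset.sum_range_succ' (fun j => C (kc p N m j) *
        ((C (2*p-1) * X + C ((j:ℝ) - p*N)) * phi j)) (m+1)]
    congr 1
    · apply Finset.sum_congr rfl; intro j _; push_cast; ring_nf
    · norm_num
  -- extend second sum to range (m+2)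
  have hsecond : (∑ j ∈ Finset.range (m+2), C (((m:ℝ) - j) * kc p N m j) * phi j)
      = ∑ j ∈ Finset.range (m+1), C (((m:ℝ) - j) * kc p N m j) * phi j := by
    rw [Finset.sum_range_succ (fun j => C (((m:ℝ) - j) * kc p N m j) * phi j) (m+1),
      kc_zero p (N:ℝ) (by omega : m < m+1)]
    simp
  rw [add_right_comm, hfirst, ← hsecond, ← Finset.sum_add_distrib]
  apply Finset.sum_congr rfl
  intro j _
  simp only [map_sub, map_add, map_mul, map_one, map_zero, map_ofNat]
  ring

end Struct

lemma comp_add_one_comp_sub_one (f : Polynomial ℝ) : (f.comp (X+1)).comp (X-1) = f := by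
  rw [comp_assoc]
  have e : ((X:Polynomial ℝ) + 1).comp (X - 1) = X := by
    simp [add_comp]
  rw [e, comp_X]

lemma L_xkraw1 (p : ℝ) (N : ℕ) (d n : ℕ) (hn : n ≠ d) :
    C p * (X - C (N:ℝ)) * xkraw1 d n p N + C (1-p) * X * (xkraw1 d n p N).comp (X-1)
      = kraw d p N * kraw n p N := by
  have hnd : (n:ℝ) - (d:ℝ) ≠ 0 := sub_ne_zero.2 (by exact_mod_cast hn)
  have hu : C (1/((n:ℝ)-(d:ℝ))) * (C (n:ℝ) - C (d:ℝ)) = 1 := by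
    rw [← map_sub, ← map_mul, one_div, inv_mul_cancel₀ hnd, map_one]
  have Sd := struct p N d
  have Sn := struct p N n
  simp only [map_sub, map_mul, map_add, map_one, map_ofNat] at Sd Sn
  rw [xkraw1]
  have hcomp : ((kraw d p N * (kraw n p N).comp (X + 1) -
      (kraw d p N).comp (X + 1) * kraw n p N)).comp (X-1)
      = (kraw d p N).comp (X-1) * kraw n p N - kraw d p N * (kraw n p N).comp (X-1) := by
    rw [sub_comp, mul_comp, mul_comp, comp_add_one_comp_sub_one, comp_add_one_comp_sub_one]
  rw [mul_comp, C_comp, hcomp]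
  simp only [map_sub, map_mul, map_add, map_one, map_ofNat]
  linear_combination (C (1/((n:ℝ)-(d:ℝ))) * kraw d p N) * Sn
    - (C (1/((n:ℝ)-(d:ℝ))) * kraw n p N) * Sd + (kraw d p N * kraw n p N) * hu

lemma phi_factor_eq (i : ℕ) : (C ((i:ℕ):ℝ) - X) = -(X - C ((i:ℕ):ℝ)) := by ring

lemma phi_natDegree (j : ℕ) : (phi j).natDegree = j := by
  have h1 : ∀ i : ℕ, (C ((i:ℕ):ℝ) - X).natDegree = 1 := fun i => by
    rw [phi_factor_eq, natDegree_neg, natDegree_X_sub_C]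
  rw [phi]
  rw [Polynomial.natDegree_prod _ _ (fun i _ => by
    rw [phi_factor_eq]; exact neg_ne_zero.2 (X_sub_C_ne_zero _))]
  simp only [h1, Finset.sum_const, smul_eq_mul, mul_one, Finset.card_range]

lemma phi_leadingCoeff (j : ℕ) : (phi j).leadingCoeff = (-1)^j := by
  have h1 : ∀ i : ℕ, (C ((i:ℕ):ℝ) - X).leadingCoeff = -1 := fun i => by
    rw [phi_factor_eq, leadingCoeff_neg, (monic_X_sub_C _).leadingCoeff]
  rw [phi, Polynomial.leadingCoeff_prod]
  simp only [h1, Finset.prod_const, Finset.card_range]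

lemma prod_neg_succ (m : ℕ) : ∏ j ∈ Finset.range m, (-((j:ℝ)+1)) = (-1)^m * (Nat.factorial m) := by
  induction m with
  | zero => simp
  | succ m ih => rw [Finset.prod_range_succ, ih, Nat.factorial_succ]; push_cast; ring

lemma poch_neg_self (m : ℕ) : poch (-(m:ℝ)) m = (-1)^m * (Nat.factorial m) := by
  rw [poch, ← Finset.prod_range_reflect]
  rw [Finset.prod_congr rfl (fun j hj => ?_), prod_neg_succ]
  have hj' := Finset.mem_range.1 hj
  rw [Nat.cast_sub (by omega), Nat.cast_sub (by omega), Nat.cast_one]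
  ring

lemma kc_self (p : ℝ) (N : ℕ) (m : ℕ) : kc p N m m = (-1)^m := by
  rw [kc, Nat.sub_self, poch_neg_self]
  rw [show poch (-(N:ℝ) + m) 0 = 1 from rfl]
  have : (Nat.factorial m : ℝ) ≠ 0 := Nat.cast_ne_zero.2 (Nat.factorial_ne_zero m)
  field_simp

lemma kraw_coeff_self (p : ℝ) (N : ℕ) (m : ℕ) : (kraw m p N).coeff m = 1 := by
  rw [kraw_eq_sum, finset_sum_coeff, Finset.sum_range_succ]
  rw [Finset.sum_eq_zero (fun j hj => ?_), zero_add, coeff_C_mul]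
  · rw [show (phi m).coeff m = (phi m).leadingCoeff from by
      rw [leadingCoeff, phi_natDegree], phi_leadingCoeff, kc_self, ← pow_add]
    exact Even.neg_one_pow ⟨m, by omega⟩
  · rw [coeff_C_mul, coeff_eq_zero_of_natDegree_lt, mul_zero]
    rw [phi_natDegree]; exact Finset.mem_range.1 hj

lemma kraw_natDegree_le (p : ℝ) (N : ℕ) (m : ℕ) : (kraw m p N).natDegree ≤ m := by
  rw [kraw_eq_sum]
  apply Polynomial.natDegree_sum_le_of_forall_le
  intro j hj
  refine (natDegree_mul_le).trans ?_
  rw [natDegree_C, phi_natDegree, zero_add]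
  exact Nat.lt_succ_iff.1 (Finset.mem_range.1 hj)

lemma kraw_natDegree (p : ℝ) (N : ℕ) (m : ℕ) : (kraw m p N).natDegree = m :=
  le_antisymm (kraw_natDegree_le p N m)
    (le_natDegree_of_ne_zero (by rw [kraw_coeff_self]; norm_num))

lemma kraw_monic (p : ℝ) (N : ℕ) (m : ℕ) : (kraw m p N).Monic := by
  rw [Monic, leadingCoeff, kraw_natDegree, kraw_coeff_self]

lemma kraw_ne_zero (p : ℝ) (N : ℕ) (m : ℕ) : kraw m p N ≠ 0 := (kraw_monic p N m).ne_zero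

lemma kraw_zero_eq (p : ℝ) (N : ℕ) : kraw 0 p N = 1 := by
  rw [kraw_eq_sum]
  simp [kc, poch, phi]

-- discrete derivative lemmas
lemma comp_X_add_one_coeff (f : Polynomial ℝ) (k M : ℕ) (h : f.natDegree < M) :
    (f.comp (X+1)).coeff k = ∑ i ∈ Finset.range M, f.coeff i * (i.choose k : ℝ) := by
  conv_lhs => rw [f.as_sum_range' M h]
  rw [Polynomial.sum_comp, finset_sum_coeff]
  apply Finset.sum_congr rfl
  intro i _
  rw [← C_mul_X_pow_eq_monomial, mul_comp, C_comp, pow_comp, X_comp, coeff_C_mul,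
    coeff_X_add_one_pow]

lemma delta_coeff_eq_zero (f : Polynomial ℝ) (k : ℕ) (h : f.natDegree ≤ k) :
    (f.comp (X+1) - f).coeff k = 0 := by
  rw [coeff_sub, comp_X_add_one_coeff f k (k+1) (by omega), Finset.sum_range_succ,
    Nat.choose_self, Finset.sum_eq_zero (fun i hi => ?_)]
  · simp
  · rw [Nat.choose_eq_zero_of_lt (Finset.mem_range.1 hi)]; simp

lemma delta_coeff_top (f : Polynomial ℝ) (k : ℕ) (h : f.natDegree ≤ k+1) :
    (f.comp (X+1) - f).coeff k = ((k:ℝ)+1) * f.coeff (k+1) := by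
  rw [coeff_sub, comp_X_add_one_coeff f k (k+2) (by omega), Finset.sum_range_succ,
    Finset.sum_range_succ, Nat.choose_self, Finset.sum_eq_zero (fun i hi => ?_)]
  · rw [Nat.choose_succ_self_right]; push_cast; ring
  · rw [Nat.choose_eq_zero_of_lt (Finset.mem_range.1 hi)]; simp

lemma delta_natDegree_le (f : Polynomial ℝ) (m : ℕ) (h : f.natDegree ≤ m) :
    (f.comp (X+1) - f).natDegree ≤ m - 1 :=
  natDegree_le_iff_coeff_eq_zero.2 (fun k hk => delta_coeff_eq_zero f k (by omega))

-- xkraw1 degree facts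
lemma xkraw1_facts (p : ℝ) (N : ℕ) (d n : ℕ) (hn : n ≠ d) :
    (xkraw1 d n p N).natDegree ≤ n + d - 1 ∧ (xkraw1 d n p N).coeff (n + d - 1) = 1 := by
  have hnd : (n:ℝ) - (d:ℝ) ≠ 0 := sub_ne_zero.2 (by exact_mod_cast hn)
  set A := kraw d p N with hA
  set B := kraw n p N with hB
  have hW : A * B.comp (X+1) - A.comp (X+1) * B
      = A * (B.comp (X+1) - B) - (A.comp (X+1) - A) * B := by ring
  rw [xkraw1, ← hA, ← hB, hW]
  rcases Nat.eq_zero_or_pos n with rfl | hn1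
  · -- n = 0, d ≥ 1
    have hd1 : 1 ≤ d := by omega
    obtain ⟨d', rfl⟩ : ∃ d', d = d' + 1 := ⟨d - 1, by omega⟩
    have hBo : B = 1 := kraw_zero_eq p N
    rw [hBo]
    simp only [one_comp, sub_self, mul_zero, zero_sub, mul_one]
    rw [show (0:ℕ) + (d'+1) - 1 = d' from by omega]
    have hne : ((0:ℝ) - ((d'+1:ℕ):ℝ)) ≠ 0 := by
      push_cast
      have : (0:ℝ) ≤ d' := Nat.cast_nonneg d'
      intro h; linarith
    constructor
    · refine natDegree_mul_le.trans ?_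
      rw [natDegree_C, zero_add, natDegree_neg]
      exact delta_natDegree_le A (d'+1) (kraw_natDegree_le p N (d'+1))
    · rw [coeff_C_mul, coeff_neg,
        delta_coeff_top A d' (kraw_natDegree_le p N (d'+1)), kraw_coeff_self]
      have hdp : ((d':ℝ)+1) ≠ 0 := by positivity
      push_cast
      rw [show ((0:ℝ) - ((d':ℝ)+1)) = -((d':ℝ)+1) from by ring]
      field_simp
      try rw [div_self (show (-1 + -(d':ℝ)) ≠ 0 from by intro h; apply hdp; linarith)]
  · rcases Nat.eq_zero_or_pos d with rfl | hd1
    · -- d = 0, n ≥ 1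
      obtain ⟨n', rfl⟩ : ∃ n', n = n' + 1 := ⟨n - 1, by omega⟩
      have hAo : A = 1 := kraw_zero_eq p N
      rw [hAo]
      simp only [one_comp, sub_self, zero_mul, sub_zero, one_mul]
      constructor
      · refine natDegree_mul_le.trans ?_
        rw [natDegree_C, zero_add]
        exact delta_natDegree_le B (n'+1) (kraw_natDegree_le p N (n'+1))
      · rw [show (n'+1) + 0 - 1 = n' from by omega, coeff_C_mul,
          delta_coeff_top B n' (kraw_natDegree_le p N (n'+1)), kraw_coeff_self]
        have hdp : ((n':ℝ)+1) ≠ 0 := by positivity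
        push_cast
        field_simp
        ring
    · -- both ≥ 1
      obtain ⟨d', rfl⟩ : ∃ d', d = d' + 1 := ⟨d - 1, by omega⟩
      obtain ⟨n', rfl⟩ : ∃ n', n = n' + 1 := ⟨n - 1, by omega⟩
      have hdegA : A.natDegree ≤ d' + 1 := kraw_natDegree_le p N (d'+1)
      have hdegB : B.natDegree ≤ n' + 1 := kraw_natDegree_le p N (n'+1)
      have hdB : (B.comp (X+1) - B).natDegree ≤ n' := delta_natDegree_le B (n'+1) hdegB
      have hdA : (A.comp (X+1) - A).natDegree ≤ d' := delta_natDegree_le A (d'+1) hdegA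
      constructor
      · refine natDegree_mul_le.trans ?_
        rw [natDegree_C, zero_add]
        refine (natDegree_sub_le _ _).trans ?_
        apply max_le
        · exact natDegree_mul_le.trans (by omega)
        · exact natDegree_mul_le.trans (by omega)
      · rw [show (n'+1) + (d'+1) - 1 = n' + d' + 1 from by omega, coeff_C_mul, coeff_sub]
        have h1 : (A * (B.comp (X+1) - B)).coeff (n' + d' + 1)
            = A.coeff (d'+1) * (B.comp (X+1) - B).coeff n' := by
          rw [show n' + d' + 1 = (d'+1) + n' from by omega]
          exact coeff_mul_add_eq_of_natDegree_le hdegA hdB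
        have h2 : ((A.comp (X+1) - A) * B).coeff (n' + d' + 1)
            = (A.comp (X+1) - A).coeff d' * B.coeff (n'+1) := by
          rw [show n' + d' + 1 = d' + (n'+1) from by omega]
          exact coeff_mul_add_eq_of_natDegree_le hdA hdegB
        rw [h1, h2, delta_coeff_top B n' hdegB, delta_coeff_top A d' hdegA,
          kraw_coeff_self, kraw_coeff_self]
        have hne : (n':ℝ) - (d':ℝ) ≠ 0 := by
          intro h; apply hnd; push_cast; linarith
        push_cast at hnd ⊢
        field_simp

noncomputable def wt (p : ℝ) (N : ℕ) (x : ℕ) : ℝ := (N.choose x : ℝ) * p^x * (1-p)^(N-x)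

noncomputable def Phi (p : ℝ) (N : ℕ) (f : Polynomial ℝ) : ℝ :=
  ∑ x ∈ Finset.range (N+1), f.eval (x:ℝ) * wt p N x

lemma Phi_add (p : ℝ) (N : ℕ) (f g : Polynomial ℝ) :
    Phi p N (f + g) = Phi p N f + Phi p N g := by
  rw [Phi, Phi, Phi, ← Finset.sum_add_distrib]
  apply Finset.sum_congr rfl; intro x _; rw [eval_add]; ring

lemma Phi_sub (p : ℝ) (N : ℕ) (f g : Polynomial ℝ) :
    Phi p N (f - g) = Phi p N f - Phi p N g := by
  rw [Phi, Phi, Phi, ← Finset.sum_sub_distrib]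
  apply Finset.sum_congr rfl; intro x _; rw [eval_sub]; ring

lemma Phi_C_mul (p : ℝ) (N : ℕ) (a : ℝ) (f : Polynomial ℝ) :
    Phi p N (C a * f) = a * Phi p N f := by
  rw [Phi, Phi, Finset.mul_sum]
  apply Finset.sum_congr rfl; intro x _; rw [eval_mul, eval_C]; ring

lemma wt_pos (p : ℝ) (hp0 : 0 < p) (hp1 : p < 1) (N : ℕ) {x : ℕ} (hx : x ≤ N) :
    0 < wt p N x := by
  have h1 : (0:ℝ) < N.choose x := by
    exact_mod_cast Nat.choose_pos hx
  have h2 : (0:ℝ) < 1 - p := by linarith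
  exact mul_pos (mul_pos h1 (pow_pos hp0 x)) (pow_pos h2 _)

lemma wt_rec (p : ℝ) (N : ℕ) {x : ℕ} (hx : x < N) :
    (1-p) * ((x:ℝ)+1) * wt p N (x+1) = p * ((N:ℝ)-x) * wt p N x := by
  rw [wt, wt, show N - x = (N - (x+1)) + 1 from by omega, pow_succ, pow_succ]
  have h2 : (N.choose (x+1) : ℝ) * ((x:ℝ)+1) = (N.choose x : ℝ) * ((N:ℝ) - (x:ℝ)) := by
    have h := Nat.choose_succ_right_eq N x
    have h' : ((N.choose (x + 1) * (x + 1) : ℕ) : ℝ) = ((N.choose x * (N - x) : ℕ) : ℝ) := by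
      rw [h]
    push_cast [Nat.cast_sub hx.le] at h'
    exact h'
  linear_combination (p^x * p * (1-p)^(N-(x+1)) * (1-p)) * h2

/-- The key summation-by-parts identity : `Φ(L q) = 0` for every polynomial `q`. -/
lemma Phi_L (p : ℝ) (N : ℕ) (q : Polynomial ℝ) :
    Phi p N (C p * (X - C (N:ℝ)) * q + C (1-p) * X * q.comp (X-1)) = 0 := by
  rw [Phi]
  have hev : ∀ x : ℕ, (C p * (X - C (N:ℝ)) * q + C (1-p) * X * q.comp (X-1)).eval (x:ℝ)
      = p * ((x:ℝ) - N) * q.eval (x:ℝ) + (1-p) * (x:ℝ) * q.eval ((x:ℝ)-1) := by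
    intro x; simp [eval_comp]
  rw [Finset.sum_congr rfl (fun x _ => by rw [hev x, add_mul])]
  rw [Finset.sum_add_distrib]
  have h2 : (∑ x ∈ Finset.range (N+1), (1-p) * (x:ℝ) * q.eval ((x:ℝ)-1) * wt p N x)
      = ∑ x ∈ Finset.range (N+1), p * ((N:ℝ) - x) * q.eval (x:ℝ) * wt p N x := by
    rw [Finset.sum_range_succ' (fun x => (1-p) * (x:ℝ) * q.eval ((x:ℝ)-1) * wt p N x) N]
    rw [Finset.sum_range_succ (fun x => p * ((N:ℝ) - x) * q.eval (x:ℝ) * wt p N x) N]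
    rw [show p * ((N:ℝ) - (N:ℕ)) * q.eval ((N:ℕ):ℝ) * wt p N N = 0 from by
      rw [sub_self, mul_zero, zero_mul, zero_mul]]
    rw [show (1-p) * ((0:ℕ):ℝ) * q.eval (((0:ℕ):ℝ)-1) * wt p N 0 = 0 from by
      rw [Nat.cast_zero, mul_zero, zero_mul, zero_mul]]
    rw [add_zero, add_zero]
    apply Finset.sum_congr rfl
    intro x hx
    have hxN : x < N := Finset.mem_range.1 hx
    have := wt_rec p N hxN
    have hcast : (((x+1:ℕ)):ℝ) = (x:ℝ) + 1 := by push_cast; ring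
    rw [hcast, show (x:ℝ) + 1 - 1 = (x:ℝ) from by ring]
    linear_combination q.eval (x:ℝ) * this
  rw [h2, ← Finset.sum_add_distrib]
  apply Finset.sum_eq_zero
  intro x _
  ring

noncomputable def Dop (p : ℝ) (N : ℕ) (f : Polynomial ℝ) : Polynomial ℝ :=
  C p * (X - C (N:ℝ)) * f.comp (X+1) - C (1-p) * X * f.comp (X-1)

lemma Dop_kraw (p : ℝ) (N : ℕ) (m : ℕ) :
    Dop p N (kraw m p N) = (C (2*p-1) * X + C ((m:ℝ) - p*N)) * kraw m p N := struct p N m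

lemma Phi_claim1 (p : ℝ) (N : ℕ) (f g : Polynomial ℝ) :
    Phi p N (C p * (X - C (N:ℝ)) * (f.comp (X+1) * g))
      = - Phi p N (C (1-p) * X * (f * g.comp (X-1))) := by
  have h := Phi_L p N (f.comp (X+1) * g)
  rw [show (f.comp (X+1) * g).comp (X-1) = f * g.comp (X-1) from by
    rw [mul_comp, comp_add_one_comp_sub_one]] at h
  rw [Phi_add] at h
  linarith

lemma Dop_sym (p : ℝ) (N : ℕ) (f g : Polynomial ℝ) :
    Phi p N (Dop p N f * g) = Phi p N (f * Dop p N g) := by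
  have e1 : Dop p N f * g = C p * (X - C (N:ℝ)) * (f.comp (X+1) * g)
      - C (1-p) * X * (f.comp (X-1) * g) := by rw [Dop]; ring
  have e2 : f * Dop p N g = C p * (X - C (N:ℝ)) * (g.comp (X+1) * f)
      - C (1-p) * X * (g.comp (X-1) * f) := by rw [Dop]; ring
  rw [e1, e2, Phi_sub, Phi_sub, Phi_claim1 p N f g, Phi_claim1 p N g f]
  rw [show f * g.comp (X-1) = g.comp (X-1) * f from mul_comm _ _,
    show g * f.comp (X-1) = f.comp (X-1) * g from mul_comm _ _]
  ring

lemma Phi_kraw_orth (p : ℝ) (N : ℕ) {m n : ℕ} (hmn : m ≠ n) :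
    Phi p N (kraw m p N * kraw n p N) = 0 := by
  have e : ∀ k l : ℕ, Phi p N (Dop p N (kraw k p N) * kraw l p N)
      = Phi p N ((C (2*p-1) * X - C (p*N)) * (kraw k p N * kraw l p N))
        + (k:ℝ) * Phi p N (kraw k p N * kraw l p N) := by
    intro k l
    rw [Dop_kraw]
    rw [show (C (2*p-1) * X + C ((k:ℝ) - p*N)) * kraw k p N * kraw l p N
        = (C (2*p-1) * X - C (p*N)) * (kraw k p N * kraw l p N)
          + C (k:ℝ) * (kraw k p N * kraw l p N) from by
      simp only [map_sub, map_add, map_mul, map_neg, map_ofNat, map_one]; ring]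
    rw [Phi_add, Phi_C_mul]
  have h1 := e m n
  have h2 := e n m
  have hsym := Dop_sym p N (kraw m p N) (kraw n p N)
  rw [h1] at hsym
  rw [show kraw m p N * Dop p N (kraw n p N) = Dop p N (kraw n p N) * kraw m p N from
    mul_comm _ _] at hsym
  rw [h2] at hsym
  rw [show kraw n p N * kraw m p N = kraw m p N * kraw n p N from mul_comm _ _] at hsym
  have hmn' : (m:ℝ) ≠ (n:ℝ) := by exact_mod_cast hmn
  have : ((m:ℝ) - n) * Phi p N (kraw m p N * kraw n p N) = 0 := by linarith
  rcases mul_eq_zero.1 this with h | h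
  · exact absurd (by linarith [sub_eq_zero.1 h] : (m:ℝ) = n) hmn'
  · exact h

lemma Phi_zero_poly (p : ℝ) (N : ℕ) : Phi p N 0 = 0 := by simp [Phi]

lemma Phi_low (p : ℝ) (N : ℕ) (d : ℕ) :
    ∀ (b : ℕ) (s : Polynomial ℝ), ∀ _ : s.natDegree < b, ∀ _ : s.natDegree < d, s ≠ 0 →
      Phi p N (kraw d p N * s) = 0 := by
  intro b
  induction b with
  | zero => intro s hs; omega
  | succ b ih =>
    intro s hsb hsd hs0
    set m := s.natDegree with hm
    set t := s - C s.leadingCoeff * kraw m p N with ht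
    have hcoefft : t.coeff m = 0 := by
      rw [ht, coeff_sub, coeff_C_mul, kraw_coeff_self, mul_one, hm, coeff_natDegree, sub_self]
    have htdeg : t.natDegree ≤ m := by
      refine (natDegree_sub_le _ _).trans (max_le le_rfl ?_)
      refine natDegree_mul_le.trans ?_
      rw [natDegree_C, zero_add, kraw_natDegree]
    have hts : kraw d p N * s = kraw d p N * t
        + C s.leadingCoeff * (kraw d p N * kraw m p N) := by
      rw [ht]; ring
    have horth : Phi p N (kraw d p N * kraw m p N) = 0 :=
      Phi_kraw_orth p N (by omega : d ≠ m)
    have hPt : Phi p N (kraw d p N * t) = 0 := by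
      by_cases ht0 : t = 0
      · rw [ht0, mul_zero, Phi_zero_poly]
      · have htlt : t.natDegree < m :=
          lt_of_le_of_ne htdeg (fun h => ht0 (by
            have := coeff_natDegree (p := t)
            rw [h, hcoefft] at this
            exact leadingCoeff_eq_zero.1 this.symm))
        exact ih t (by omega) (by omega) ht0
    rw [hts, Phi_add, Phi_C_mul, hPt, horth, mul_zero, add_zero]

lemma Phi_sq_pos (p : ℝ) (hp0 : 0 < p) (hp1 : p < 1) (N : ℕ) (d : ℕ) (hd : d ≤ N) :
    0 < Phi p N (kraw d p N * kraw d p N) := by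
  have hex : ∃ x ∈ Finset.range (N+1), (kraw d p N).eval ((x:ℕ):ℝ) ≠ 0 := by
    by_contra h
    push_neg at h
    have : kraw d p N = 0 := by
      apply Polynomial.eq_zero_of_natDegree_lt_card_of_eval_eq_zero' (kraw d p N)
        ((Finset.range (N+1)).image (fun x : ℕ => (x:ℝ)))
      · intro y hy
        obtain ⟨x, hx, rfl⟩ := Finset.mem_image.1 hy
        exact h x hx
      · rw [Finset.card_image_of_injective _ Nat.cast_injective, Finset.card_range,
          kraw_natDegree]
        omega
    exact kraw_ne_zero p N d this
  obtain ⟨x0, hx0, hx0ne⟩ := hex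
  rw [Phi]
  refine Finset.sum_pos' (fun x hx => ?_) ⟨x0, hx0, ?_⟩
  · rw [eval_mul]
    have hw := wt_pos p hp0 hp1 N (show x ≤ N from by
      have := Finset.mem_range.1 hx; omega)
    exact mul_nonneg (mul_self_nonneg _) hw.le
  · rw [eval_mul]
    have hw := wt_pos p hp0 hp1 N (show x0 ≤ N from by
      have := Finset.mem_range.1 hx0; omega)
    exact mul_pos (mul_self_pos.2 hx0ne) hw


section Main
variable (p : ℝ) (N : ℕ)

noncomputable def Lop (q : Polynomial ℝ) : Polynomial ℝ :=
  C p * (X - C (N:ℝ)) * q + C (1-p) * X * q.comp (X - 1)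

lemma Lop_sub_C_mul (a b : Polynomial ℝ) (c : ℝ) :
    Lop p N (a - C c * b) = Lop p N a - C c * Lop p N b := by
  rw [Lop, Lop, Lop, sub_comp, mul_comp, C_comp]
  ring

lemma Lop_coeff_top {q : Polynomial ℝ} (hq : q ≠ 0) :
    (Lop p N q).coeff (q.natDegree + 1) = q.leadingCoeff := by
  set m := q.natDegree
  have e1 : Lop p N q = (C p * (X * q) - C (p * N) * q)
      + C (1-p) * (X * q.comp (X - 1)) := by
    rw [Lop, map_mul]; ring
  have hqc : (q.comp (X - 1)).natDegree = m := by
    rw [natDegree_comp, show ((X:Polynomial ℝ) - 1) = X - C 1 from by rw [C_1],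
      natDegree_X_sub_C, mul_one]
  have hqclead : (q.comp (X - 1)).coeff m = q.leadingCoeff := by
    rw [← hqc, coeff_natDegree, leadingCoeff_comp (by
      rw [show ((X:Polynomial ℝ) - 1) = X - C 1 from by rw [C_1], natDegree_X_sub_C]; omega)]
    rw [show ((X:Polynomial ℝ) - 1) = X - C 1 from by rw [C_1], (monic_X_sub_C _).leadingCoeff]
    rw [one_pow, mul_one]
  rw [e1, coeff_add, coeff_sub, coeff_C_mul, coeff_C_mul, coeff_C_mul, coeff_X_mul,
    coeff_X_mul, hqclead, coeff_eq_zero_of_natDegree_lt (by omega : m < m + 1),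
    coeff_natDegree]
  ring

lemma Lop_natDegree_le (q : Polynomial ℝ) : (Lop p N q).natDegree ≤ q.natDegree + 1 := by
  rw [Lop]
  refine (natDegree_add_le _ _).trans (max_le ?_ ?_)
  · refine natDegree_mul_le.trans ?_
    have h1 : (C p * (X - C (N:ℝ))).natDegree ≤ 1 := by
      refine natDegree_mul_le.trans ?_
      rw [natDegree_C, zero_add, show ((X:Polynomial ℝ) - C (N:ℝ)) = X - C (N:ℝ) from rfl,
        natDegree_X_sub_C]
    omega
  · refine natDegree_mul_le.trans ?_
    have h1 : (C (1-p) * (X:Polynomial ℝ)).natDegree ≤ 1 :=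
      natDegree_mul_le.trans (by rw [natDegree_C, zero_add, natDegree_X])
    have h2 : (q.comp (X - 1)).natDegree ≤ q.natDegree := by
      rw [natDegree_comp, show ((X:Polynomial ℝ) - 1) = X - C 1 from by rw [C_1],
        natDegree_X_sub_C, mul_one]
    omega

lemma Lop_ne_zero {q : Polynomial ℝ} (hq : q ≠ 0) : Lop p N q ≠ 0 := by
  intro h
  apply leadingCoeff_ne_zero.2 hq
  rw [← Lop_coeff_top p N hq, h, coeff_zero]

lemma Lop_natDegree {q : Polynomial ℝ} (hq : q ≠ 0) :
    (Lop p N q).natDegree = q.natDegree + 1 :=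
  le_antisymm (Lop_natDegree_le p N q)
    (le_natDegree_of_ne_zero (by rw [Lop_coeff_top p N hq]; exact leadingCoeff_ne_zero.2 hq))

end Main

/-- `K_d(x;p,N)` divides `p(x−N) q(x) + (1−p) x q(x−1)` if and only if `q` lies in the real
span of the type-1 exceptional Krawtchouk polynomials `{K̂_n^{(1,d)} : n ≠ d}`. -/
theorem krawtchouk_backward_polynomial_iff_span (N : ℕ) (hN : 1 ≤ N) (p : ℝ)
    (hp0 : 0 < p) (hp1 : p < 1) (d : ℕ) (hd : d ≤ N) (q : Polynomial ℝ) :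
    (kraw d p (N : ℝ) ∣
        Polynomial.C p * (Polynomial.X - Polynomial.C (N : ℝ)) * q +
          Polynomial.C (1 - p) * Polynomial.X * q.comp (Polynomial.X - 1)) ↔
      q ∈ Submodule.span ℝ
        {P : Polynomial ℝ | ∃ n : ℕ, n ≠ d ∧ P = xkraw1 d n p (N : ℝ)} := by
  constructor
  · -- dvd → span
    have key : ∀ (b : ℕ) (q : Polynomial ℝ), q.natDegree < b →
        (kraw d p (N:ℝ) ∣ Lop p N q) →
        q ∈ Submodule.span ℝ {P : Polynomial ℝ | ∃ n : ℕ, n ≠ d ∧ P = xkraw1 d n p (N:ℝ)} := by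
      intro b
      induction b with
      | zero => intro q h; omega
      | succ b ih =>
        intro q hqb hdvd
        by_cases hq0 : q = 0
        · rw [hq0]; exact Submodule.zero_mem _
        have hLne : Lop p N q ≠ 0 := Lop_ne_zero p N hq0
        have hLdeg : (Lop p N q).natDegree = q.natDegree + 1 := Lop_natDegree p N hq0
        have hdm : d ≤ q.natDegree + 1 := by
          have h := Polynomial.natDegree_le_of_dvd hdvd hLne
          rw [kraw_natDegree, hLdeg] at h
          exact h
        by_cases hnd : q.natDegree + 1 - d = d
        · -- impossible case: degree 2d - 1
          exfalso
          obtain ⟨r, hr⟩ := hdvd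
          have hrne : r ≠ 0 := by
            rintro rfl; rw [mul_zero] at hr; exact hLne hr
          have hmul := natDegree_mul (kraw_ne_zero p N d) hrne
          rw [← hr, hLdeg, kraw_natDegree] at hmul
          have hrdeg : r.natDegree = d := by omega
          have hrlc : r.leadingCoeff = q.leadingCoeff := by
            have h1 : (Lop p N q).leadingCoeff = q.leadingCoeff := by
              rw [leadingCoeff, hLdeg, Lop_coeff_top p N hq0]
            rw [hr, leadingCoeff_mul, (kraw_monic p N d), one_mul] at h1
            exact h1
          set s := r - C r.leadingCoeff * kraw d p (N:ℝ) with hs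
          have hscoeff : s.coeff d = 0 := by
            rw [hs, coeff_sub, coeff_C_mul, kraw_coeff_self, mul_one, ← hrdeg,
              coeff_natDegree, sub_self]
          have hsdeg : s.natDegree ≤ d := by
            refine (natDegree_sub_le _ _).trans (max_le (le_of_eq hrdeg) ?_)
            refine natDegree_mul_le.trans ?_
            rw [natDegree_C, zero_add, kraw_natDegree]
          have hPhi0 : Phi p N (Lop p N q) = 0 := Phi_L p N q
          have hPs : Phi p N (kraw d p (N:ℝ) * s) = 0 := by
            by_cases hs0 : s = 0
            · rw [hs0, mul_zero, Phi_zero_poly]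
            · refine Phi_low p N d d s ?_ ?_ hs0 <;>
              · refine lt_of_le_of_ne hsdeg (fun h => hs0 ?_)
                have hh := coeff_natDegree (p := s)
                rw [h, hscoeff] at hh
                exact leadingCoeff_eq_zero.1 hh.symm
          have hzero : r.leadingCoeff * Phi p N (kraw d p (N:ℝ) * kraw d p (N:ℝ)) = 0 := by
            have h2 : kraw d p (N:ℝ) * r = kraw d p (N:ℝ) * s
                + C r.leadingCoeff * (kraw d p (N:ℝ) * kraw d p (N:ℝ)) := by
              rw [hs]; ring
            rw [hr, h2, Phi_add, Phi_C_mul, hPs, zero_add] at hPhi0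
            exact hPhi0
          have hpos := Phi_sq_pos p hp0 hp1 N d hd
          have hlc0 : r.leadingCoeff = 0 := by
            rcases mul_eq_zero.1 hzero with h | h
            · exact h
            · exact absurd h (ne_of_gt hpos)
          rw [hrlc] at hlc0
          exact leadingCoeff_ne_zero.2 hq0 hlc0
        · -- reduction case
          set n := q.natDegree + 1 - d with hn
          obtain ⟨hdegle, hcoeff⟩ := xkraw1_facts p N d n hnd
          have hm' : n + d - 1 = q.natDegree := by omega
          rw [hm'] at hdegle hcoeff
          set c := q.leadingCoeff with hc
          set q' := q - C c * xkraw1 d n p (N:ℝ) with hq'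
          have hdvd' : kraw d p (N:ℝ) ∣ Lop p N q' := by
            rw [hq', Lop_sub_C_mul]
            refine dvd_sub hdvd (Dvd.dvd.mul_left ?_ _)
            have hLx : Lop p N (xkraw1 d n p (N:ℝ)) = kraw d p (N:ℝ) * kraw n p (N:ℝ) :=
              L_xkraw1 p N d n hnd
            rw [hLx]
            exact Dvd.intro _ rfl
          have hq'coeff : q'.coeff q.natDegree = 0 := by
            rw [hq', coeff_sub, coeff_C_mul, hcoeff, mul_one, coeff_natDegree, ← hc, sub_self]
          have hq'deg : q'.natDegree ≤ q.natDegree := by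
            refine (natDegree_sub_le _ _).trans (max_le le_rfl ?_)
            refine natDegree_mul_le.trans ?_
            rw [natDegree_C, zero_add]
            exact hdegle
          have hmem' : q' ∈ Submodule.span ℝ
              {P : Polynomial ℝ | ∃ n : ℕ, n ≠ d ∧ P = xkraw1 d n p (N:ℝ)} := by
            by_cases hq'0 : q' = 0
            · rw [hq'0]; exact Submodule.zero_mem _
            · refine ih q' ?_ hdvd'
              have hlt : q'.natDegree < q.natDegree := by
                refine lt_of_le_of_ne hq'deg (fun h => hq'0 ?_)
                have hh := coeff_natDegree (p := q')
                rw [h, hq'coeff] at hh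
                exact leadingCoeff_eq_zero.1 hh.symm
              omega
          have hgen : xkraw1 d n p (N:ℝ) ∈ Submodule.span ℝ
              {P : Polynomial ℝ | ∃ n : ℕ, n ≠ d ∧ P = xkraw1 d n p (N:ℝ)} :=
            Submodule.subset_span ⟨n, hnd, rfl⟩
          have hdec : q = q' + C c * xkraw1 d n p (N:ℝ) := by rw [hq']; ring
          rw [hdec]
          refine Submodule.add_mem _ hmem' ?_
          rw [C_mul']
          exact Submodule.smul_mem _ c hgen
    intro hdvd
    exact key (q.natDegree + 1) q (by omega) hdvd
  · -- span → dvd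
    intro hmem
    let W : Submodule ℝ (Polynomial ℝ) :=
      { carrier := {q : Polynomial ℝ | kraw d p (N:ℝ) ∣ Lop p N q}
        add_mem' := by
          intro a b ha hb
          simp only [Set.mem_setOf_eq] at ha hb ⊢
          have h : Lop p N (a + b) = Lop p N a + Lop p N b := by
            rw [Lop, Lop, Lop, add_comp]; ring
          rw [h]
          exact dvd_add ha hb
        zero_mem' := by
          simp only [Set.mem_setOf_eq]
          have h : Lop p N (0 : Polynomial ℝ) = 0 := by
            rw [Lop]; simp
          rw [h]
          exact dvd_zero _
        smul_mem' := by
          intro c a ha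
          simp only [Set.mem_setOf_eq] at ha ⊢
          have h : Lop p N (c • a) = C c * Lop p N a := by
            rw [← C_mul', Lop, Lop, mul_comp, C_comp]; ring
          rw [h]
          exact ha.mul_left _ }
    have hle : Submodule.span ℝ {P : Polynomial ℝ | ∃ n : ℕ, n ≠ d ∧ P = xkraw1 d n p (N:ℝ)}
        ≤ W := by
      rw [Submodule.span_le]
      rintro P ⟨n, hnd, rfl⟩
      show kraw d p (N:ℝ) ∣ (C p * (X - C (N:ℝ)) * xkraw1 d n p (N:ℝ)
        + C (1-p) * X * (xkraw1 d n p (N:ℝ)).comp (X - 1))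
      rw [L_xkraw1 p N d n hnd]
      exact Dvd.intro _ rfl
    exact hle hmem
end

section
/- Let N ≥ 1 be an integer, p ∈ (0,1), and let d be an integer with 0 ≤ d ≤ N. For a real polynomial π(x), set r(x) = p·(x−N)·π(x) + (1−p)·x·π(x−1). Then K_d(x;p,N)·K_d(x+1;p,N) divides K_d(x+1;p,N)²·r(x) − K_d(x;p,N)²·r(x+1) in ℝ[x] if and only if K_d(x;p,N) divides r(x) in ℝ[x]. (Equivalently: the type-1 exceptional Krawtchouk operator maps π to a polynomial if and only if the backward operator B^{(1,d)} maps π to a polynomial.) -/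
open Polynomial

namespace KrawAux
open Finset

noncomputable def Φ (j : ℕ) : Polynomial ℝ :=
  ∏ i ∈ Finset.range j, (Polynomial.C (i : ℝ) - Polynomial.X)

lemma Φ_succ (j : ℕ) : Φ (j+1) = Φ j * (C (j:ℝ) - X) := Finset.prod_range_succ _ _

lemma Φ_comp_add (j : ℕ) : (Φ j).comp (X + 1) = Φ j - C (j:ℝ) * Φ (j-1) := by
  cases j with
  | zero => simp [Φ]
  | succ k =>
    have h : (Φ (k+1)).comp (X+1) = Φ k * (C (-1:ℝ) - X) := by
      rw [Φ, Polynomial.prod_comp, Finset.prod_range_succ']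
      simp only [sub_comp, C_comp, X_comp]
      rw [show (∏ i ∈ range k, (C (↑(i+1) : ℝ) - (X+1))) = Φ k from
        Finset.prod_congr rfl fun i _ => by
          simp only [Nat.cast_add, Nat.cast_one, C_add, C_1]; ring]
      simp only [Nat.cast_zero, C_0, C_neg, C_1]; ring
    rw [h, Φ_succ]
    simp only [Nat.add_sub_cancel, Nat.cast_add, Nat.cast_one, C_add, C_1, C_neg]
    ring

lemma Φ_comp_sub (j : ℕ) : X * (Φ j).comp (X - 1) = (X - C (j:ℝ)) * Φ j := by
  have h : (Φ j).comp (X-1) = ∏ i ∈ range j, (C (↑(i+1) : ℝ) - X) := by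
    rw [Φ, Polynomial.prod_comp]
    exact Finset.prod_congr rfl fun i _ => by
      simp only [sub_comp, C_comp, X_comp, Nat.cast_add, Nat.cast_one, C_add, C_1]; ring
  have h2 : Φ (j+1) = (C (0:ℝ) - X) * ∏ i ∈ range j, (C (↑(i+1) : ℝ) - X) := by
    rw [Φ, Finset.prod_range_succ']
    rw [mul_comm]; norm_num
  have h3 : Φ (j+1) = Φ j * (C (j:ℝ) - X) := Φ_succ j
  have key : (C (0:ℝ) - X) * (Φ j).comp (X-1) = Φ j * (C (j:ℝ) - X) := by
    rw [h, ← h2, h3]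
  rw [C_0] at key
  linear_combination (-1 : Polynomial ℝ) * key

noncomputable def cc (n : ℕ) (p a : ℝ) (j : ℕ) : ℝ :=
  poch (-(n:ℝ)) j * poch (-a + j) (n - j) / (Nat.factorial j) * p ^ (n - j)

lemma poch_succ (c : ℝ) (k : ℕ) : poch c (k+1) = poch c k * (c + k) :=
  Finset.prod_range_succ _ _

lemma poch_succ' (c : ℝ) (k : ℕ) : poch c (k+1) = c * poch (c+1) k := by
  rw [poch, Finset.prod_range_succ', poch]
  rw [Finset.prod_congr rfl (fun (i : ℕ) _ => show c + ↑(i+1) = (c+1) + (i:ℝ) by push_cast; ring)]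
  simp [mul_comm]

lemma poch_neg_nat_zero {n k : ℕ} (h : n < k) : poch (-(n:ℝ)) k = 0 :=
  Finset.prod_eq_zero (Finset.mem_range.mpr h) (by simp)

lemma c_rec (n : ℕ) (p a : ℝ) (j : ℕ) :
    p * (j+1) * (a - j) * cc n p a (j+1) = ((n:ℝ) - j) * cc n p a j := by
  rcases lt_trichotomy j n with h | h | h
  · have h1 : n - j = (n - j - 1) + 1 := by omega
    have h2 : n - (j+1) = n - j - 1 := by omega
    unfold cc
    rw [h1, h2, poch_succ (-(n:ℝ)) j, poch_succ' (-a + (j:ℝ))]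
    rw [show (-a + ((j:ℕ)+1:ℕ) : ℝ) = (-a + (j:ℝ)) + 1 by push_cast; ring]
    have hf : (Nat.factorial (j+1) : ℝ) = (j+1) * Nat.factorial j := by
      rw [Nat.factorial_succ]; push_cast; ring
    rw [hf]
    have hfj : (Nat.factorial j : ℝ) ≠ 0 := Nat.cast_ne_zero.mpr (Nat.factorial_ne_zero j)
    have hj1 : ((j:ℝ)+1) ≠ 0 := by positivity
    field_simp
    ring
  · subst h
    unfold cc
    rw [poch_neg_nat_zero (Nat.lt_succ_self j)]
    simp
  · unfold cc
    rw [poch_neg_nat_zero (Nat.lt_succ_of_lt h), poch_neg_nat_zero h]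
    simp

lemma kraw_eq (n : ℕ) (p a : ℝ) :
    kraw n p a = ∑ j ∈ Finset.range (n+1), C (cc n p a j) * Φ j := rfl

noncomputable def B (n : ℕ) (p a : ℝ) (j : ℕ) : Polynomial ℝ :=
  C (p * j * (a - j + 1) * cc n p a j) * Φ (j-1)

lemma term_eq (n : ℕ) (p a : ℝ) (j : ℕ) :
    C p * (C a - X) * ((C (cc n p a j) * Φ j).comp (X+1))
    + C (1-p) * X * ((C (cc n p a j) * Φ j).comp (X-1))
    - (C p * (C a - X) + C (1-p) * X - C (n:ℝ)) * (C (cc n p a j) * Φ j)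
    = B n p a (j+1) - B n p a j := by
  simp only [mul_comp, C_comp]
  have hC := congrArg C (c_rec n p a j)
  cases j with
  | zero =>
    simp only [B, Φ, Finset.range_zero, Finset.prod_empty, Finset.range_one, Nat.cast_zero,
      Nat.cast_one, zero_add, map_mul, map_sub, map_add, map_one, map_zero, mul_zero,
      zero_mul, Nat.zero_sub] at *
    simp only [comp, eval₂_one]
    linear_combination -hC
  | succ k =>
    have h1 := Φ_comp_add (k+1)
    have h2 := Φ_comp_sub (k+1)
    have h3 := Φ_succ k
    simp only [Nat.add_sub_cancel] at h1 ⊢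
    simp only [B, Nat.add_sub_cancel, map_mul, map_sub, map_add, map_one, map_natCast,
      Nat.cast_add, Nat.cast_one] at hC h1 h2 h3 ⊢
    linear_combination (C (cc n p a (k+1)) * C p * (C a - X)) * h1
      + (C (cc n p a (k+1)) * (1 - C p)) * h2
      + (C (cc n p a (k+1)) * C p * ((k:Polynomial ℝ)+1)) * h3 - Φ (k+1) * hC

lemma diff_eq (n : ℕ) (p a : ℝ) :
    C p * (C a - X) * (kraw n p a).comp (X + 1) + C (1-p) * X * (kraw n p a).comp (X - 1)
    = (C p * (C a - X) + C (1-p) * X - C (n:ℝ)) * kraw n p a := by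
  rw [← sub_eq_zero, kraw_eq]
  have hsum : ∀ q : Polynomial ℝ, (∑ j ∈ Finset.range (n+1), C (cc n p a j) * Φ j).comp q
      = ∑ j ∈ Finset.range (n+1), (C (cc n p a j) * Φ j).comp q := by
    intro q; simp [comp, eval₂_finset_sum]
  rw [hsum, hsum, Finset.mul_sum, Finset.mul_sum, Finset.mul_sum,
      ← Finset.sum_add_distrib, ← Finset.sum_sub_distrib]
  rw [Finset.sum_congr rfl (fun j _ => term_eq n p a j), Finset.sum_range_sub (B n p a)]
  have h1 : B n p a (n+1) = 0 := by
    unfold B cc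
    rw [poch_neg_nat_zero (Nat.lt_succ_self n)]
    simp
  have h0 : B n p a 0 = 0 := by unfold B; simp
  rw [h1, h0, sub_zero]

lemma poch_neg_self (n : ℕ) : poch (-(n:ℝ)) n = (-1)^n * n.factorial := by
  induction n with
  | zero => simp [poch]
  | succ k ih =>
    rw [poch_succ']
    rw [show (-(↑(k+1):ℝ) + 1) = -(k:ℝ) by push_cast; ring] at *
    rw [show (-(↑(k+1):ℝ)) = -((k:ℝ)+1) by push_cast; ring]
    rw [ih, Nat.factorial_succ]
    push_cast
    ring

lemma Φ_eq (j : ℕ) : Φ j = C ((-1:ℝ)^j) * ∏ i ∈ Finset.range j, (X - C (i:ℝ)) := by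
  induction j with
  | zero => simp [Φ]
  | succ k ih =>
    rw [Φ_succ, ih, Finset.prod_range_succ, pow_succ]
    simp only [map_mul, map_neg, map_one]
    ring

lemma M_monic (j : ℕ) : (∏ i ∈ Finset.range j, (X - C (i:ℝ))).Monic :=
  monic_prod_of_monic _ _ fun i _ => monic_X_sub_C _

lemma M_natDegree (j : ℕ) : (∏ i ∈ Finset.range j, (X - C (i:ℝ))).natDegree = j := by
  rw [natDegree_prod_of_monic _ _ fun i _ => monic_X_sub_C _]
  simp only [natDegree_X_sub_C]
  simp

lemma Φ_natDegree_le (j : ℕ) : (Φ j).natDegree ≤ j := by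
  rw [Φ_eq]
  refine le_trans (natDegree_mul_le) ?_
  rw [natDegree_C, M_natDegree]
  simp

lemma Φ_coeff_self (j : ℕ) : (Φ j).coeff j = (-1)^j := by
  rw [Φ_eq, coeff_C_mul]
  have := (M_monic j).coeff_natDegree
  rw [M_natDegree] at this
  rw [this, mul_one]

lemma cc_self (n : ℕ) (p a : ℝ) : cc n p a n = (-1)^n := by
  unfold cc
  rw [poch_neg_self]
  simp [poch, Nat.factorial_ne_zero]

lemma kraw_natDegree_le (n : ℕ) (p a : ℝ) : (kraw n p a).natDegree ≤ n := by
  rw [kraw_eq]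
  apply natDegree_sum_le_of_forall_le
  intro j hj
  refine le_trans natDegree_mul_le ?_
  rw [natDegree_C]
  have := Φ_natDegree_le j
  have hj' : j ≤ n := Nat.lt_succ_iff.mp (Finset.mem_range.mp hj)
  omega

lemma kraw_coeff_self (n : ℕ) (p a : ℝ) : (kraw n p a).coeff n = 1 := by
  rw [kraw_eq, finset_sum_coeff, Finset.sum_range_succ]
  have hz : ∀ j ∈ Finset.range n, (C (cc n p a j) * Φ j).coeff n = 0 := by
    intro j hj
    apply coeff_eq_zero_of_natDegree_lt
    refine lt_of_le_of_lt (le_trans natDegree_mul_le ?_) (Finset.mem_range.mp hj)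
    rw [natDegree_C]; simpa using Φ_natDegree_le j
  rw [Finset.sum_congr rfl hz, Finset.sum_const, smul_zero, zero_add, coeff_C_mul,
    Φ_coeff_self, cc_self]
  rw [← mul_pow]
  norm_num

lemma kraw_monic (n : ℕ) (p a : ℝ) : (kraw n p a).Monic :=
  monic_of_natDegree_le_of_coeff_eq_one n (kraw_natDegree_le n p a) (kraw_coeff_self n p a)

lemma kraw_natDegree (n : ℕ) (p a : ℝ) : (kraw n p a).natDegree = n :=
  le_antisymm (kraw_natDegree_le n p a)
    (le_natDegree_of_ne_zero (by rw [kraw_coeff_self]; exact one_ne_zero))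

lemma aeval_rec (d N : ℕ) (p : ℝ) (z : ℂ) :
    (p:ℂ) * ((N:ℂ) - z) * aeval (z+1) (kraw d p (N:ℝ))
      + (1-(p:ℂ)) * z * aeval (z-1) (kraw d p (N:ℝ))
    = ((p:ℂ) * ((N:ℂ) - z) + (1-(p:ℂ)) * z - (d:ℂ)) * aeval z (kraw d p (N:ℝ)) := by
  have h := congrArg (aeval z : Polynomial ℝ →ₐ[ℝ] ℂ) (diff_eq d p (N:ℝ))
  simp only [map_add, map_mul, map_sub, map_one, aeval_C, aeval_X, aeval_comp,
    AlgHom.coe_coe, Complex.coe_algebraMap] at h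
  push_cast at h ⊢
  convert h using 2 <;> push_cast <;> ring

lemma down (d N : ℕ) (p : ℝ) (hp1 : p ≠ 1) (z : ℂ)
    (hz : aeval z (kraw d p (N:ℝ)) = 0) (hz1 : aeval (z+1) (kraw d p (N:ℝ)) = 0) :
    ∀ k : ℕ, (∀ i : ℕ, i < k → z - i ≠ 0) →
      aeval (z - k) (kraw d p (N:ℝ)) = 0 ∧ aeval (z - k + 1) (kraw d p (N:ℝ)) = 0 := by
  intro k
  induction k with
  | zero => intro _; simpa using ⟨hz, hz1⟩
  | succ k ih =>
    intro hne
    obtain ⟨h0, h1⟩ := ih (fun i hi => hne i (by omega))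
    have hrec := aeval_rec d N p (z - k)
    rw [show z - (k:ℂ) + 1 = z - k + 1 by ring] at hrec
    rw [h0, h1, mul_zero, mul_zero, zero_add] at hrec
    have hq : (1 - (p:ℂ)) ≠ 0 := by
      rw [show (1 - (p:ℂ)) = ((1 - p : ℝ) : ℂ) by push_cast; ring]
      exact_mod_cast sub_ne_zero.mpr (Ne.symm hp1)
    have hzk : z - (k:ℂ) ≠ 0 := hne k (by omega)
    have := mul_eq_zero.mp hrec
    rcases this with h | h
    · exact absurd (mul_eq_zero.mp h) (by push_neg; exact ⟨hq, hzk⟩)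
    · constructor
      · rw [show z - ((k:ℕ)+1:ℕ) = z - k - 1 by push_cast; ring]; exact h
      · rw [show z - ((k:ℕ)+1:ℕ) + 1 = z - k by push_cast; ring]; exact h0

lemma up (d N : ℕ) (p : ℝ) (hp0 : p ≠ 0) (z : ℂ)
    (hz : aeval z (kraw d p (N:ℝ)) = 0) (hz1 : aeval (z+1) (kraw d p (N:ℝ)) = 0) :
    ∀ k : ℕ, (∀ i : ℕ, i < k → z + 1 + i ≠ (N:ℂ)) →
      aeval (z + k) (kraw d p (N:ℝ)) = 0 ∧ aeval (z + k + 1) (kraw d p (N:ℝ)) = 0 := by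
  intro k
  induction k with
  | zero => intro _; simpa using ⟨hz, hz1⟩
  | succ k ih =>
    intro hne
    obtain ⟨h0, h1⟩ := ih (fun i hi => hne i (by omega))
    have hrec := aeval_rec d N p (z + k + 1)
    rw [show z + (k:ℂ) + 1 - 1 = z + k by ring] at hrec
    rw [h0, h1, mul_zero, mul_zero, add_zero] at hrec
    have hpz : (p:ℂ) ≠ 0 := by exact_mod_cast hp0
    have h' : z + (k:ℂ) + 1 ≠ (N:ℂ) := by
      rw [show z + (k:ℂ) + 1 = z + 1 + k by ring]; exact hne k (by omega)
    have hNz : (N:ℂ) - (z + k + 1) ≠ 0 := sub_ne_zero.mpr (Ne.symm h')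
    have := mul_eq_zero.mp hrec
    rcases this with h | h
    · exact absurd (mul_eq_zero.mp h) (by push_neg; exact ⟨hpz, hNz⟩)
    · constructor
      · rw [show z + ((k:ℕ)+1:ℕ) = z + k + 1 by push_cast; ring]; exact h1
      · rw [show z + ((k:ℕ)+1:ℕ) + 1 = z + k + 1 + 1 by push_cast; ring]; exact h

lemma card_le_natDegree {f : Polynomial ℂ} (hf : f ≠ 0) (s : Finset ℂ)
    (h : ∀ x ∈ s, Polynomial.eval x f = 0) : s.card ≤ f.natDegree := by
  calc s.card ≤ f.roots.toFinset.card :=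
        Finset.card_le_card (fun x hx => Multiset.mem_toFinset.mpr
          ((mem_roots hf).mpr (h x hx)))
    _ ≤ Multiset.card f.roots := f.roots.toFinset_card_le
    _ ≤ f.natDegree := f.card_roots'

lemma no_common_root (d N : ℕ) (hd : d ≤ N) (p : ℝ) (hp0 : p ≠ 0) (hp1 : p ≠ 1) (z : ℂ)
    (hz : aeval z (kraw d p (N:ℝ)) = 0) (hz1 : aeval (z+1) (kraw d p (N:ℝ)) = 0) : False := by
  set K := kraw d p (N:ℝ) with hK
  set Kc := K.map (algebraMap ℝ ℂ) with hKc
  have hKc0 : Kc ≠ 0 := ((kraw_monic d p (N:ℝ)).map (algebraMap ℝ ℂ)).ne_zero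
  have hdeg : Kc.natDegree = d := by
    rw [hKc, natDegree_map_eq_of_injective (algebraMap ℝ ℂ).injective, hK, kraw_natDegree]
  have heval : ∀ w : ℂ, Polynomial.eval w Kc = aeval w K := fun w => by
    rw [hKc, eval_map_algebraMap]
  by_cases hcase : ∀ i : ℕ, i < d → z ≠ (i:ℂ)
  · have hroots : ∀ k : ℕ, k ≤ d → Polynomial.eval (z - k) Kc = 0 := by
      intro k hk
      rw [heval]
      exact (down d N p hp1 z hz hz1 k (fun i hi => sub_ne_zero.mpr
        (hcase i (by omega)))).1
    have hcard := card_le_natDegree hKc0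
      ((Finset.range (d+1)).image (fun k : ℕ => z - k))
      (by intro x hx
          obtain ⟨k, hk, rfl⟩ := Finset.mem_image.mp hx
          exact hroots k (Nat.lt_succ_iff.mp (Finset.mem_range.mp hk)))
    rw [Finset.card_image_of_injective _ (fun a b hab => by
          have : (a:ℂ) = b := by linear_combination -hab
          exact_mod_cast this),
        Finset.card_range, hdeg] at hcard
    omega
  · push_neg at hcase
    obtain ⟨m, hm, hzm⟩ := hcase
    subst hzm
    have hroots : ∀ t : ℕ, t ≤ N → Polynomial.eval (t:ℂ) Kc = 0 := by
      intro t ht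
      rcases le_or_gt t m with h | h
      · have hdn := (down d N p hp1 ((m:ℕ):ℂ) hz hz1 (m - t) (fun i hi => by
          intro hEq
          have h1 : (m:ℂ) = i := sub_eq_zero.mp hEq
          have h2 : m = i := Nat.cast_injective h1
          omega)).1
        have harg : (m:ℂ) - ((m-t:ℕ):ℂ) = (t:ℂ) := by
          rw [Nat.cast_sub h]; ring
        rw [heval, ← harg]
        exact hdn
      · have hup := (up d N p hp0 ((m:ℕ):ℂ) hz hz1 (t-m-1) (fun i hi => by
          intro hEq
          have h1 : ((m+1+i : ℕ):ℂ) = ((N:ℕ):ℂ) := by push_cast; linear_combination hEq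
          have h2 : m+1+i = N := Nat.cast_injective h1
          omega)).2
        have harg : (m:ℂ) + ((t-m-1:ℕ):ℂ) + 1 = (t:ℂ) := by
          have he : t - m - 1 = t - (m+1) := by omega
          rw [he, Nat.cast_sub (by omega : m+1 ≤ t)]
          push_cast
          ring
        rw [heval, ← harg]
        exact hup
    have hcard := card_le_natDegree hKc0
      ((Finset.range (N+1)).image (fun t : ℕ => (t:ℂ)))
      (by intro x hx
          obtain ⟨t, ht, rfl⟩ := Finset.mem_image.mp hx
          exact hroots t (Nat.lt_succ_iff.mp (Finset.mem_range.mp ht)))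
    rw [Finset.card_image_of_injective _ Nat.cast_injective, Finset.card_range, hdeg] at hcard
    omega

lemma kraw_coprime (d N : ℕ) (hd : d ≤ N) (p : ℝ) (hp0 : p ≠ 0) (hp1 : p ≠ 1) :
    IsCoprime (kraw d p (N:ℝ)) ((kraw d p (N:ℝ)).comp (X + 1)) := by
  refine (Polynomial.isCoprime_iff_aeval_ne_zero_of_isAlgClosed ℝ ℂ
    (kraw d p (N:ℝ)) ((kraw d p (N:ℝ)).comp (X + 1))).mpr (fun z => ?_)
  by_contra hcon
  push_neg at hcon
  obtain ⟨h1, h2⟩ := hcon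
  rw [aeval_comp, map_add, aeval_X, map_one] at h2
  exact no_common_root d N hd p hp0 hp1 z h1 h2

end KrawAux

/-- With `r(x) = p(x−N) π(x) + (1−p) x π(x−1)`, the product `K_d(x;p,N) K_d(x+1;p,N)` divides
`K_d(x+1;p,N)² r(x) − K_d(x;p,N)² r(x+1)` if and only if `K_d(x;p,N)` divides `r(x)`; i.e. the
type-1 exceptional Krawtchouk operator maps `π` to a polynomial iff the backward operator
`B^{(1,d)}` does. -/
theorem krawtchouk_exceptional_operator_polynomial_iff (N : ℕ) (hN : 1 ≤ N) (p : ℝ)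
    (hp0 : 0 < p) (hp1 : p < 1) (d : ℕ) (hd : d ≤ N) (piP : Polynomial ℝ) :
    (kraw d p (N : ℝ) * (kraw d p (N : ℝ)).comp (Polynomial.X + 1) ∣
        ((kraw d p (N : ℝ)).comp (Polynomial.X + 1)) ^ 2 *
            (Polynomial.C p * (Polynomial.X - Polynomial.C (N : ℝ)) * piP +
              Polynomial.C (1 - p) * Polynomial.X * piP.comp (Polynomial.X - 1)) -
          (kraw d p (N : ℝ)) ^ 2 *
            (Polynomial.C p * (Polynomial.X - Polynomial.C (N : ℝ)) * piP +
              Polynomial.C (1 - p) * Polynomial.X * piP.comp (Polynomial.X - 1)).comp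
              (Polynomial.X + 1)) ↔
      kraw d p (N : ℝ) ∣
        Polynomial.C p * (Polynomial.X - Polynomial.C (N : ℝ)) * piP +
          Polynomial.C (1 - p) * Polynomial.X * piP.comp (Polynomial.X - 1) := by
  have hco : IsCoprime (kraw d p (N:ℝ)) ((kraw d p (N:ℝ)).comp (X + 1)) :=
    KrawAux.kraw_coprime d N hd p hp0.ne' (ne_of_lt hp1)
  constructor
  · intro h
    set K := kraw d p (N:ℝ) with hK
    set K₁ := K.comp (X+1) with hK₁
    set r := C p * (X - C (N:ℝ)) * piP + C (1-p) * X * piP.comp (X-1) with hr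
    have h1 : K ∣ K₁^2 * r - K^2 * r.comp (X+1) := dvd_trans (dvd_mul_right K K₁) h
    have h2 : K ∣ K^2 * r.comp (X+1) := ⟨K * r.comp (X+1), by ring⟩
    have h3 : K ∣ K₁^2 * r := by
      have := dvd_add h1 h2
      simpa using this
    exact (hco.pow_right).dvd_of_dvd_mul_left h3
  · rintro ⟨s, hs⟩
    rw [hs]
    refine ⟨(kraw d p (N:ℝ)).comp (X+1) * s - kraw d p (N:ℝ) * s.comp (X+1), ?_⟩
    rw [mul_comp]
    ring
end

section
/- Let N ≥ 1 be an integer, p ∈ (0,1), d an integer with 0 ≤ d ≤ N, and n ∈ ℤ≥0 with n ≠ d. Then there exist real numbers c_ℓ, indexed by integers ℓ with max(0, n−d−1) ≤ ℓ ≤ n+d+1 and ℓ ≠ d, such that K_{d+1}(x+1;p,N+1) · K̂_n^{(1,d)}(x;p,N) = Σ_ℓ c_ℓ · K̂_ℓ^{(1,d)}(x;p,N) holds as an identity of real polynomials. (This is the lowest-degree recurrence relation, with 2d+3 terms, for the type-1 exceptional Krawtchouk polynomials.) -/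
open Polynomial

namespace XK

noncomputable def fall (j : ℕ) : Polynomial ℝ :=
  ∏ i ∈ Finset.range j, (Polynomial.C (i : ℝ) - Polynomial.X)

noncomputable def w (p a : ℝ) (n j : ℕ) : ℝ :=
  poch (-(n : ℝ)) j * poch (-a + j) (n - j) / (Nat.factorial j) * p ^ (n - j)

lemma kraw_eq (n : ℕ) (p a : ℝ) :
    kraw n p a = ∑ j ∈ Finset.range (n + 1), C (w p a n j) * fall j := rfl

@[simp] lemma poch_zero (c : ℝ) : poch c 0 = 1 := by simp [poch]

lemma poch_succ (c : ℝ) (k : ℕ) : poch c (k + 1) = poch c k * (c + k) := by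
  simp [poch, Finset.prod_range_succ]

lemma poch_succ' (c : ℝ) (k : ℕ) : poch c (k + 1) = c * poch (c + 1) k := by
  rw [poch, Finset.prod_range_succ']
  simp only [Nat.cast_zero, add_zero, mul_comm]
  congr 1
  · exact Finset.prod_congr rfl fun i _ => by push_cast; ring

lemma poch_congr {c d : ℝ} (h : c = d) (k : ℕ) : poch c k = poch d k := by rw [h]

lemma poch_nat_eq_zero {m j : ℕ} (h : m < j) : poch (-(m : ℝ)) j = 0 := by
  apply Finset.prod_eq_zero (Finset.mem_range.mpr h)
  simp

lemma w_eq_zero {m j : ℕ} (h : m < j) (p a : ℝ) : w p a m j = 0 := by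
  simp [w, poch_nat_eq_zero h]

lemma kraw_eq_big (n M : ℕ) (h : n + 1 ≤ M) (p a : ℝ) :
    kraw n p a = ∑ j ∈ Finset.range M, C (w p a n j) * fall j := by
  rw [kraw_eq]
  apply Finset.sum_subset (Finset.range_subset_range.mpr h)
  intro j _ hj
  rw [Finset.mem_range, not_lt] at hj
  rw [w_eq_zero (by omega), map_zero, zero_mul]

lemma fall_succ (j : ℕ) : fall (j + 1) = (C (j : ℝ) - X) * fall j := by
  rw [fall, fall, Finset.prod_range_succ]; ring

lemma X_mul_fall (j : ℕ) : X * fall j = C (j : ℝ) * fall j - fall (j + 1) := by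
  rw [fall_succ]; ring

lemma fall_comp_succ (j : ℕ) :
    (fall (j + 1)).comp (X + 1) = fall (j + 1) - C ((j : ℝ) + 1) * fall j := by
  have hterm : ∀ i : ℕ, (C ((i + 1 : ℕ) : ℝ) - X).comp (X + 1) = C (i : ℝ) - X := by
    intro i
    rw [sub_comp, C_comp, X_comp, Nat.cast_succ, C_add, C_1]
    ring
  have h1 : (fall (j + 1)).comp (X + 1) = (- X - 1) * fall j := by
    rw [fall, prod_comp, Finset.prod_range_succ', fall]
    rw [Finset.prod_congr rfl (fun i _ => hterm i)]
    simp only [Nat.cast_zero, map_zero, sub_comp, C_comp, X_comp, zero_comp, zero_sub, C_0, neg_comp]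
    ring
  rw [h1, fall_succ, C_add, C_1]
  ring

lemma fall_zero : fall 0 = 1 := by simp [fall]

lemma factorial_cast_succ (j : ℕ) :
    ((Nat.factorial (j+1) : ℝ)) = ((j:ℝ)+1) * (Nat.factorial j : ℝ) := by
  rw [Nat.factorial_succ]; push_cast; ring

lemma poch_neg_succ (m j : ℕ) :
    poch (-(((m+1):ℕ) : ℝ)) (j+1) = (-((m:ℝ)+1)) * poch (-(m:ℝ)) j := by
  rw [show (-(((m+1):ℕ):ℝ)) = (-((m:ℝ)+1)) by push_cast; ring, poch_succ']
  exact congrArg _ (poch_congr (by ring) j)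

lemma l2coeff (p a : ℝ) (m j : ℕ) :
    -((j:ℝ)+1) * w p a (m+1) (j+1) = ((m:ℝ)+1) * w p (a-1) m j := by
  unfold w
  rw [show m + 1 - (j + 1) = m - j by omega, poch_neg_succ,
    poch_congr (show -a + ((j+1:ℕ):ℝ) = -(a-1) + (j:ℝ) by push_cast; ring) (m - j),
    factorial_cast_succ]
  have h1 : ((Nat.factorial j : ℝ)) ≠ 0 := Nat.cast_ne_zero.mpr (Nat.factorial_ne_zero j)
  have h2 : ((j:ℝ)+1) ≠ 0 := by positivity
  field_simp

lemma l2 (m : ℕ) (p a : ℝ) :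
    (kraw (m+1) p a).comp (X + 1) = kraw (m+1) p a + C ((m:ℝ)+1) * kraw m p (a-1) := by
  have key : (kraw (m+1) p a).comp (X + 1) - kraw (m+1) p a
      = ∑ j ∈ Finset.range (m+2),
          C (w p a (m+1) j) * ((fall j).comp (X+1) - fall j) := by
    rw [kraw_eq, sum_comp]
    simp only [mul_comp, C_comp]
    rw [← Finset.sum_sub_distrib]
    exact Finset.sum_congr rfl fun j _ => by ring
  have key2 : ∑ j ∈ Finset.range (m+2),
        C (w p a (m+1) j) * ((fall j).comp (X+1) - fall j)
      = ∑ j ∈ Finset.range (m+1),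
          C (-((j:ℝ)+1) * w p a (m+1) (j+1)) * fall j := by
    rw [Finset.sum_range_succ' (fun j => C (w p a (m+1) j) * ((fall j).comp (X+1) - fall j)) (m+1)]
    rw [fall_zero, one_comp, sub_self, mul_zero, add_zero]
    refine Finset.sum_congr rfl fun j _ => ?_
    rw [fall_comp_succ, C_mul, map_neg]
    ring
  have key3 : C ((m:ℝ)+1) * kraw m p (a-1)
      = ∑ j ∈ Finset.range (m+1),
          C (((m:ℝ)+1) * w p (a-1) m j) * fall j := by
    rw [kraw_eq, Finset.mul_sum]
    exact Finset.sum_congr rfl fun j _ => by rw [C_mul]; ring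
  have key4 : (kraw (m+1) p a).comp (X + 1) - kraw (m+1) p a
      = C ((m:ℝ)+1) * kraw m p (a-1) := by
    rw [key, key2, key3]
    exact Finset.sum_congr rfl fun j _ => by rw [l2coeff]
  linear_combination key4

lemma l3coeff (p a : ℝ) (m j : ℕ) (hj : j ≤ m + 1) :
    w p (a+1) (m+1) j = w p a (m+1) j - (((m:ℝ)+1)*p) * w p a m j := by
  rcases Nat.lt_or_ge j (m+1) with h | h
  · -- j ≤ m
    have hjm : j ≤ m := by omega
    unfold w
    rw [show m + 1 - j = (m - j) + 1 by omega]
    have hPQ : poch (-((m:ℝ)+1)) j * (-((m:ℝ)+1) + j) = (-((m:ℝ)+1)) * poch (-(m:ℝ)) j := by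
      rw [← poch_succ, poch_succ']
      exact congrArg _ (poch_congr (by ring) j)
    have hc1 : poch (-(a+1) + (j:ℝ)) ((m-j) + 1)
        = (-(a+1)+(j:ℝ)) * poch (-a + (j:ℝ)) (m-j) := by
      rw [poch_succ']
      exact congrArg _ (poch_congr (by ring) (m-j))
    have hc2 : poch (-a + (j:ℝ)) ((m-j) + 1)
        = poch (-a + (j:ℝ)) (m-j) * (-a + (j:ℝ) + ((m-j:ℕ):ℝ)) := poch_succ _ _
    rw [hc1, hc2, show (-(((m+1):ℕ):ℝ)) = (-((m:ℝ)+1)) by push_cast; ring,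
      Nat.cast_sub hjm]
    linear_combination (poch (-a + (j:ℝ)) (m - j) * p ^ (m - j) * p / (Nat.factorial j : ℝ)) * hPQ
  · -- j = m+1
    have hj1 : j = m + 1 := by omega
    subst hj1
    rw [w_eq_zero (Nat.lt_succ_self m) p a, mul_zero, sub_zero]
    unfold w
    rw [Nat.sub_self]
    simp [poch_zero]

lemma l3 (m : ℕ) (p a : ℝ) :
    kraw (m+1) p (a+1) = kraw (m+1) p a - C (((m:ℝ)+1)*p) * kraw m p a := by
  rw [kraw_eq (m+1) p (a+1), kraw_eq (m+1) p a, kraw_eq_big m (m+2) (by omega) p a,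
    Finset.mul_sum, ← Finset.sum_sub_distrib]
  refine Finset.sum_congr rfl fun j hj => ?_
  rw [l3coeff p a m j (by simpa using Nat.lt_succ_iff.mp (Finset.mem_range.mp hj)), map_sub, C_mul]
  ring

lemma poch_one (c : ℝ) : poch c 1 = c := by simp [poch]

set_option maxHeartbeats 2000000 in
lemma l1coeff (p a : ℝ) (m j : ℕ) (hj : j ≤ m + 1) :
    w p a (m+1) j = (j:ℝ) * w p a m j - (if j = 0 then 0 else w p a m (j-1))
      - (p*(a-(m:ℝ)) + (m:ℝ)*(1-p)) * w p a m j
      - ((m:ℝ)*p*(1-p)*(a-(m:ℝ)+1)) * w p a (m-1) j := by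
  rcases j with _ | i
  · -- j = 0
    rcases m with _ | m'
    · -- m = 0
      simp only [if_pos rfl, Nat.cast_zero]
      unfold w
      simp [poch_succ, poch_zero]
      ring
    · -- m = m' + 1
      simp only [if_pos rfl, Nat.cast_zero, zero_mul, zero_sub]
      unfold w
      simp only [poch_zero, Nat.sub_zero, Nat.factorial_zero, Nat.cast_one, Nat.add_sub_cancel]
      have e1 : poch (-a + ((0:ℕ):ℝ)) (m' + 1 + 1)
          = poch (-a + ((0:ℕ):ℝ)) m' * (-a + m') * (-a + m' + 1) := by
        rw [poch_succ, poch_succ]; push_cast; ring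
      have e2 : poch (-a + ((0:ℕ):ℝ)) (m' + 1)
          = poch (-a + ((0:ℕ):ℝ)) m' * (-a + m') := by
        rw [poch_succ]; push_cast; ring
      rw [e1, e2]
      push_cast
      ring
  · -- j = i+1
    rw [if_neg (Nat.succ_ne_zero i)]
    have hile : i + 1 ≤ m + 1 := hj
    rcases Nat.lt_trichotomy (i+1) m with hlt | heq | hgt
    · -- generic case : m = i + r + 2
      obtain ⟨r, hr⟩ : ∃ r, m = i + r + 2 := ⟨m - i - 2, by omega⟩
      subst hr
      simp only [Nat.add_sub_cancel]
      have hF : ((Nat.factorial i : ℝ)) ≠ 0 := Nat.cast_ne_zero.mpr (Nat.factorial_ne_zero i)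
      have hi1 : ((i:ℝ)+1) ≠ 0 := by positivity
      have hfac : ((Nat.factorial (i+1) : ℝ)) = ((i:ℝ)+1) * (Nat.factorial i : ℝ) :=
        factorial_cast_succ i
      have hG : (((i:ℝ)+1) * (Nat.factorial i : ℝ)) ≠ 0 := mul_ne_zero hi1 hF
      have e1 : w p a (i+r+2+1) (i+1) * (((i:ℝ)+1) * (Nat.factorial i : ℝ))
          = (-((i:ℝ)+(r:ℝ)+2)-1) * poch (-((i:ℝ)+(r:ℝ)+2)) i
            * (poch (-a+(i:ℝ)+1) r * (-a+(i:ℝ)+1+(r:ℝ)) * (-a+(i:ℝ)+2+(r:ℝ)))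
            * p^(r+2) := by
        unfold w
        rw [show i + r + 2 + 1 - (i + 1) = r + 2 by omega, hfac,
          poch_succ' (-(((i+r+2+1):ℕ)):ℝ) i,
          poch_congr (show (-(((i+r+2+1):ℕ)):ℝ) + 1 = -((i:ℝ)+(r:ℝ)+2) by push_cast; ring) i,
          poch_congr (show (-a + (((i+1):ℕ)):ℝ) = -a+(i:ℝ)+1 by push_cast; ring) (r+2),
          poch_succ (-a+(i:ℝ)+1) (r+1), poch_succ (-a+(i:ℝ)+1) r]
        rw [div_mul_eq_mul_div, div_mul_cancel₀ _ hG]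
        push_cast
        ring
      have e2 : w p a (i+r+2) (i+1) * (((i:ℝ)+1) * (Nat.factorial i : ℝ))
          = poch (-((i:ℝ)+(r:ℝ)+2)) i * (-((i:ℝ)+(r:ℝ)+2)+(i:ℝ))
            * (poch (-a+(i:ℝ)+1) r * (-a+(i:ℝ)+1+(r:ℝ))) * p^(r+1) := by
        unfold w
        rw [show i + r + 2 - (i + 1) = r + 1 by omega, hfac,
          poch_succ (-(((i+r+2):ℕ)):ℝ) i,
          poch_congr (show (-(((i+r+2):ℕ)):ℝ) = -((i:ℝ)+(r:ℝ)+2) by push_cast; ring) i,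
          poch_congr (show (-a + (((i+1):ℕ)):ℝ) = -a+(i:ℝ)+1 by push_cast; ring) (r+1),
          poch_succ (-a+(i:ℝ)+1) r]
        rw [div_mul_eq_mul_div, div_mul_cancel₀ _ hG]
        push_cast
        ring
      have e3 : w p a (i+r+2) i * (Nat.factorial i : ℝ)
          = poch (-((i:ℝ)+(r:ℝ)+2)) i
            * ((-a+(i:ℝ)) * (poch (-a+(i:ℝ)+1) r * (-a+(i:ℝ)+1+(r:ℝ)))) * p^(r+2) := by
        unfold w
        rw [show i + r + 2 - i = r + 2 by omega,
          poch_congr (show (-(((i+r+2):ℕ)):ℝ) = -((i:ℝ)+(r:ℝ)+2) by push_cast; ring) i,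
          poch_succ' (-a+((i:ℕ):ℝ)) (r+1),
          poch_congr (show (-a+((i:ℕ):ℝ)+1) = -a+(i:ℝ)+1 by push_cast; ring) (r+1),
          poch_succ (-a+(i:ℝ)+1) r]
        rw [div_mul_eq_mul_div, div_mul_cancel₀ _ (Nat.cast_ne_zero.mpr (Nat.factorial_ne_zero i) : ((Nat.factorial i : ℝ)) ≠ 0)]
      have e4 : w p a (i+r+2-1) (i+1) * (((i:ℝ)+1) * (Nat.factorial i : ℝ))
          = poch (-((i:ℝ)+(r:ℝ)+2)+1) i * (-((i:ℝ)+(r:ℝ)+2)+1+(i:ℝ))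
            * poch (-a+(i:ℝ)+1) r * p^r := by
        unfold w
        rw [show i + r + 2 - 1 = i + r + 1 by omega,
          show i + r + 1 - (i + 1) = r by omega, hfac,
          poch_congr (show (-a + (((i+1):ℕ)):ℝ) = -a+(i:ℝ)+1 by push_cast; ring) r,
          poch_succ (-(((i+r+1):ℕ)):ℝ) i,
          poch_congr (show (-(((i+r+1):ℕ)):ℝ) = -((i:ℝ)+(r:ℝ)+2)+1 by push_cast; ring) i]
        rw [div_mul_eq_mul_div, div_mul_cancel₀ _ hG]
        push_cast
        ring
      have hrel : (-((i:ℝ)+(r:ℝ)+2)) * poch (-((i:ℝ)+(r:ℝ)+2)+1) i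
          = poch (-((i:ℝ)+(r:ℝ)+2)) i * (-((i:ℝ)+(r:ℝ)+2)+(i:ℝ)) :=
        (poch_succ' _ i).symm.trans (poch_succ _ i)
      apply mul_right_cancel₀ hG
      have hc1 : ((i+1:ℕ):ℝ) = (i:ℝ)+1 := by push_cast; ring
      have hc2 : ((i+r+2:ℕ):ℝ) = (i:ℝ)+(r:ℝ)+2 := by push_cast; ring
      rw [hc1, hc2]
      linear_combination e1 + ((p*(a-((i:ℝ)+(r:ℝ)+2)) + ((i:ℝ)+(r:ℝ)+2)*(1-p)) - ((i:ℝ)+1)) * e2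
        + ((i:ℝ)+1) * e3
        + (((i:ℝ)+(r:ℝ)+2)*p*(1-p)*(a-((i:ℝ)+(r:ℝ)+2)+1)) * e4
        - (p*(1-p)*(a-((i:ℝ)+(r:ℝ)+2)+1)*(-((i:ℝ)+(r:ℝ)+2)+1+(i:ℝ))*(poch (-a+(i:ℝ)+1) r)*p^r) * hrel
    · -- j = m
      subst heq
      simp only [Nat.add_sub_cancel]
      rw [w_eq_zero (show i < i + 1 by omega) p a, mul_zero, sub_zero]
      unfold w
      rw [show i + 1 + 1 - (i + 1) = 1 by omega, show i + 1 - (i + 1) = 0 by omega,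
        show i + 1 - i = 1 by omega]
      rw [poch_neg_succ (i+1) i, poch_succ (-(((i+1):ℕ):ℝ)) i, poch_one, poch_one, poch_zero,
        factorial_cast_succ]
      have h1 : ((Nat.factorial i : ℝ)) ≠ 0 := Nat.cast_ne_zero.mpr (Nat.factorial_ne_zero i)
      have h2 : ((i:ℝ)+1) ≠ 0 := by positivity
      push_cast
      field_simp
      ring
    · -- j = m+1
      have hjm : i + 1 = m + 1 := by omega
      rw [hjm]
      rw [w_eq_zero (Nat.lt_succ_self m) p a, w_eq_zero (show m - 1 < m + 1 by omega) p a]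
      simp only [Nat.add_sub_cancel]
      unfold w
      rw [Nat.sub_self, Nat.sub_self]
      rw [poch_neg_succ m m, poch_zero, poch_zero]
      rw [factorial_cast_succ]
      have h1 : ((Nat.factorial m : ℝ)) ≠ 0 := Nat.cast_ne_zero.mpr (Nat.factorial_ne_zero m)
      have h2 : ((m:ℝ)+1) ≠ 0 := by positivity
      field_simp
      ring

lemma l1 (m : ℕ) (p a : ℝ) :
    kraw (m+1) p a = (X - C (p*(a-(m:ℝ)) + (m:ℝ)*(1-p))) * kraw m p a
      - C ((m:ℝ)*p*(1-p)*(a-(m:ℝ)+1)) * kraw (m-1) p a := by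
  have hshift : (∑ j ∈ Finset.range (m+2), C (w p a m j) * fall (j+1))
      = ∑ j ∈ Finset.range (m+2), C (if j = 0 then (0:ℝ) else w p a m (j-1)) * fall j := by
    rw [Finset.sum_range_succ (fun j => C (w p a m j) * fall (j+1)) (m+1),
      w_eq_zero (Nat.lt_succ_self m) p a, map_zero, zero_mul, add_zero,
      Finset.sum_range_succ' (fun j => C (if j = 0 then (0:ℝ) else w p a m (j-1)) * fall j) (m+1)]
    simp only [Nat.add_sub_cancel, if_neg (Nat.succ_ne_zero _), if_true, eq_self_iff_true,
      map_zero, zero_mul, add_zero]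
  have hXk : X * kraw m p a
      = ∑ j ∈ Finset.range (m+2), C ((j:ℝ) * w p a m j) * fall j
        - ∑ j ∈ Finset.range (m+2), C (if j = 0 then (0:ℝ) else w p a m (j-1)) * fall j := by
    rw [kraw_eq_big m (m+2) (by omega), Finset.mul_sum, ← hshift, ← Finset.sum_sub_distrib]
    refine Finset.sum_congr rfl fun j _ => ?_
    rw [C_mul]
    linear_combination (C (w p a m j)) * X_mul_fall j
  have hR : (X - C (p*(a-(m:ℝ)) + (m:ℝ)*(1-p))) * kraw m p a
        - C ((m:ℝ)*p*(1-p)*(a-(m:ℝ)+1)) * kraw (m-1) p a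
      = ∑ j ∈ Finset.range (m+2),
          C ((j:ℝ) * w p a m j - (if j = 0 then 0 else w p a m (j-1))
            - (p*(a-(m:ℝ)) + (m:ℝ)*(1-p)) * w p a m j
            - ((m:ℝ)*p*(1-p)*(a-(m:ℝ)+1)) * w p a (m-1) j) * fall j := by
    rw [sub_mul, hXk, kraw_eq_big m (m+2) (by omega) p a, kraw_eq_big (m-1) (m+2) (by omega) p a,
      Finset.mul_sum, Finset.mul_sum]
    rw [← Finset.sum_sub_distrib, ← Finset.sum_sub_distrib, ← Finset.sum_sub_distrib]
    refine Finset.sum_congr rfl fun j _ => ?_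
    simp only [map_sub, C_mul]
    ring
  rw [kraw_eq (m+1) p a, hR]
  exact Finset.sum_congr rfl fun j hj => by
    rw [l1coeff p a m j (Nat.lt_succ_iff.mp (Finset.mem_range.mp hj))]

lemma fall_natDegree_le (j : ℕ) : (fall j).natDegree ≤ j := by
  induction j with
  | zero => simp [fall_zero]
  | succ j ih =>
    rw [fall_succ]
    calc ((C (j:ℝ) - X) * fall j).natDegree
        ≤ (C (j:ℝ) - X).natDegree + (fall j).natDegree := natDegree_mul_le
      _ ≤ 1 + j := by
          refine Nat.add_le_add ?_ ih
          refine le_trans (natDegree_sub_le _ _) ?_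
          simp [natDegree_C, natDegree_X]
      _ = j + 1 := by omega

lemma kraw_natDegree_le (n : ℕ) (p a : ℝ) : (kraw n p a).natDegree ≤ n := by
  rw [kraw_eq]
  apply Polynomial.natDegree_sum_le_of_forall_le
  intro j hj
  have hj' : j ≤ n := Nat.lt_succ_iff.mp (Finset.mem_range.mp hj)
  calc (C (w p a n j) * fall j).natDegree
      ≤ (C (w p a n j)).natDegree + (fall j).natDegree := natDegree_mul_le
    _ ≤ 0 + j := Nat.add_le_add (le_of_eq (natDegree_C _)) (fall_natDegree_le j)
    _ ≤ n := by omega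

/-- membership in the `C`-span of the krawtchouk polynomials indexed by `s` -/
def InS (p a : ℝ) (s : Finset ℕ) (P : Polynomial ℝ) : Prop :=
  ∃ c : ℕ → ℝ, P = ∑ j ∈ s, C (c j) * kraw j p a

lemma InS.add {p a s} {P Q : Polynomial ℝ} (hP : InS p a s P) (hQ : InS p a s Q) :
    InS p a s (P + Q) := by
  obtain ⟨c1, rfl⟩ := hP
  obtain ⟨c2, rfl⟩ := hQ
  refine ⟨fun j => c1 j + c2 j, ?_⟩
  rw [← Finset.sum_add_distrib]
  refine Finset.sum_congr rfl fun j _ => ?_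
  rw [C_add]
  ring

lemma InS.csmul {p a s} (r : ℝ) {P : Polynomial ℝ} (hP : InS p a s P) :
    InS p a s (C r * P) := by
  obtain ⟨c, rfl⟩ := hP
  refine ⟨fun j => r * c j, ?_⟩
  rw [Finset.mul_sum]
  refine Finset.sum_congr rfl fun j _ => ?_
  rw [C_mul]
  ring

lemma InS.mono {p a} {s t : Finset ℕ} (hst : s ⊆ t) {P : Polynomial ℝ}
    (hP : InS p a s P) : InS p a t P := by
  obtain ⟨c, rfl⟩ := hP
  refine ⟨fun j => if j ∈ s then c j else 0, ?_⟩
  rw [← Finset.sum_subset hst (fun j _ hjs => by simp [if_neg hjs])]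
  refine Finset.sum_congr rfl fun j hjs => ?_
  simp [if_pos hjs]

lemma InS.single {p a} {s : Finset ℕ} {j : ℕ} (hj : j ∈ s) : InS p a s (kraw j p a) := by
  classical
  refine ⟨fun i => if i = j then 1 else 0, ?_⟩
  refine ((Finset.sum_eq_single_of_mem j hj
    (fun i _ hij => by simp [hij])).trans (by simp)).symm

lemma banded (p a : ℝ) : ∀ (k : ℕ) (R : Polynomial ℝ), R.natDegree ≤ k → ∀ n : ℕ,
    InS p a (Finset.Icc (n - k) (n + k)) (R * kraw n p a) := by
  intro k
  induction k with
  | zero =>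
    intro R hR n
    rw [Polynomial.eq_C_of_natDegree_le_zero hR]
    simpa using InS.csmul (R.coeff 0)
      (InS.single (by simp : n ∈ Finset.Icc (n - 0) (n + 0)))
  | succ k ih =>
    intro R hR n
    have hXk : X * kraw n p a = kraw (n+1) p a
        + C (p*(a-(n:ℝ)) + (n:ℝ)*(1-p)) * kraw n p a
        + C ((n:ℝ)*p*(1-p)*(a-(n:ℝ)+1)) * kraw (n-1) p a := by
      linear_combination (-1 : Polynomial ℝ) * l1 n p a
    have hdvx : (R.divX).natDegree ≤ k := by
      have := Polynomial.natDegree_divX_eq_natDegree_tsub_one (p := R)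
      omega
    have h1 : InS p a (Finset.Icc (n - (k+1)) (n + (k+1))) (R.divX * kraw (n+1) p a) :=
      (ih R.divX hdvx (n+1)).mono (Finset.Icc_subset_Icc (by omega) (by omega))
    have h2 : InS p a (Finset.Icc (n - (k+1)) (n + (k+1))) (R.divX * kraw n p a) :=
      (ih R.divX hdvx n).mono (Finset.Icc_subset_Icc (by omega) (by omega))
    have h3 : InS p a (Finset.Icc (n - (k+1)) (n + (k+1))) (R.divX * kraw (n-1) p a) :=
      (ih R.divX hdvx (n-1)).mono (Finset.Icc_subset_Icc (by omega) (by omega))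
    have h4 : InS p a (Finset.Icc (n - (k+1)) (n + (k+1))) (kraw n p a) :=
      InS.single (by rw [Finset.mem_Icc]; omega)
    have key : R * kraw n p a
        = R.divX * kraw (n+1) p a
          + C (p*(a-(n:ℝ)) + (n:ℝ)*(1-p)) * (R.divX * kraw n p a)
          + C ((n:ℝ)*p*(1-p)*(a-(n:ℝ)+1)) * (R.divX * kraw (n-1) p a)
          + C (R.coeff 0) * kraw n p a := by
      conv_lhs => rw [← Polynomial.divX_mul_X_add R]
      linear_combination R.divX * hXk
    rw [key]
    exact ((h1.add (h2.csmul _)).add (h3.csmul _)).add (h4.csmul _)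

end XK

/-- The lowest-degree (2d+3–term) recurrence relation for the type-1 exceptional Krawtchouk
polynomials: `K_{d+1}(x+1;p,N+1) K̂_n^{(1,d)}(x) = Σ_ℓ c_ℓ K̂_ℓ^{(1,d)}(x)` where `ℓ` runs over
`max(0,n−d−1) ≤ ℓ ≤ n+d+1`, `ℓ ≠ d`. -/
theorem krawtchouk_exceptional_recurrence (N : ℕ) (hN : 1 ≤ N) (p : ℝ)
    (hp0 : 0 < p) (hp1 : p < 1) (d : ℕ) (hd : d ≤ N) (n : ℕ) (hnd : n ≠ d) :
    ∃ c : ℕ → ℝ,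
      (kraw (d + 1) p ((N : ℝ) + 1)).comp (Polynomial.X + 1) * xkraw1 d n p (N : ℝ) =
        ∑ ℓ ∈ (Finset.Icc (n - (d + 1)) (n + d + 1)).erase d,
          Polynomial.C (c ℓ) * xkraw1 d ℓ p (N : ℝ) := by
  classical
  set a : ℝ := (N : ℝ) with ha
  set s0 : Finset ℕ := Finset.Icc (n - (d + 1)) (n + d + 1) with hs0
  set Kd : Polynomial ℝ := kraw d p a with hKd
  set TKd : Polynomial ℝ := (kraw d p a).comp (X + 1) with hTKd
  set M : Polynomial ℝ := (kraw (d + 1) p (a + 1)).comp (X + 1) with hM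
  set Ψ : ℕ → Polynomial ℝ :=
    fun j => Kd * (kraw j p a).comp (X + 1) - TKd * kraw j p a with hΨ
  have hn1 : ((n : ℝ) + 1) ≠ 0 := by positivity
  -- Step A
  have hsA : XK.InS p a s0 (kraw (d+1) p (a+1) * kraw n p a) := by
    refine (XK.banded p a (d+1) (kraw (d+1) p (a+1))
      (XK.kraw_natDegree_le (d+1) p (a+1)) n).mono
      (Finset.Icc_subset_Icc (by omega) (by omega))
  -- Step B
  have hsB : XK.InS p a s0 (Kd * kraw (n+1) p (a+1)) := by
    have hBeq : Kd * kraw (n+1) p (a+1)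
        = Kd * kraw (n+1) p a + C (-(((n:ℝ)+1)*p)) * (Kd * kraw n p a) := by
      rw [XK.l3 n p a, map_neg]
      ring
    rw [hBeq]
    have hB1 : XK.InS p a s0 (Kd * kraw (n+1) p a) :=
      (XK.banded p a d Kd (XK.kraw_natDegree_le d p a) (n+1)).mono
        (Finset.Icc_subset_Icc (by omega) (by omega))
    have hB2 : XK.InS p a s0 (Kd * kraw n p a) :=
      (XK.banded p a d Kd (XK.kraw_natDegree_le d p a) n).mono
        (Finset.Icc_subset_Icc (by omega) (by omega))
    exact hB1.add (hB2.csmul _)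
  -- the combined polynomial G
  set G : Polynomial ℝ := kraw (d+1) p (a+1) * kraw n p a
      + C (-(((d:ℝ)+1)/((n:ℝ)+1))) * (Kd * kraw (n+1) p (a+1)) with hGdef
  have hsG : XK.InS p a s0 G := hsA.add (hsB.csmul _)
  obtain ⟨u, hu⟩ := hsG
  -- key algebraic identity
  have h1 := XK.l2 d p (a+1)
  have h2 := XK.l2 n p (a+1)
  rw [add_sub_cancel_right] at h1 h2
  have hCC : C (((d:ℝ)+1)/((n:ℝ)+1)) * C ((n:ℝ)+1) = C ((d:ℝ)+1) := by
    rw [← C_mul]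
    congr 1
    field_simp
  have key : M * Ψ n = Kd * G.comp (X + 1) - TKd * G := by
    have hcomp : G.comp (X + 1)
        = M * (kraw n p a).comp (X + 1)
          + C (-(((d:ℝ)+1)/((n:ℝ)+1))) * (TKd * (kraw (n+1) p (a+1)).comp (X + 1)) := by
      rw [hGdef]
      simp only [add_comp, mul_comp, C_comp]
      rfl
    rw [hΨ, hcomp, hGdef, hM, h1, h2, hTKd, hKd]
    simp only [map_neg]
    linear_combination (kraw d p a * (kraw d p a).comp (X+1) * kraw n p a) * hCC
  have main : M * Ψ n = ∑ j ∈ s0, C (u j) * Ψ j := by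
    rw [key, hu]
    simp only [Polynomial.sum_comp, mul_comp, C_comp, Finset.mul_sum]
    rw [← Finset.sum_sub_distrib]
    exact Finset.sum_congr rfl fun j _ => by rw [hΨ]; ring
  -- final bookkeeping
  refine ⟨fun ℓ => u ℓ * ((ℓ:ℝ) - (d:ℝ)) / ((n:ℝ) - (d:ℝ)), ?_⟩
  have hxk : ∀ j : ℕ, xkraw1 d j p a = C (1 / ((j:ℝ) - (d:ℝ))) * Ψ j := fun j => rfl
  calc M * xkraw1 d n p a
      = C (1 / ((n:ℝ) - (d:ℝ))) * (M * Ψ n) := by rw [hxk]; ring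
    _ = C (1 / ((n:ℝ) - (d:ℝ))) * ∑ j ∈ s0, C (u j) * Ψ j := by rw [main]
    _ = ∑ j ∈ s0, C (1 / ((n:ℝ) - (d:ℝ)) * u j) * Ψ j := by
        rw [Finset.mul_sum]
        exact Finset.sum_congr rfl fun j _ => by rw [C_mul]; ring
    _ = ∑ j ∈ s0.erase d, C (1 / ((n:ℝ) - (d:ℝ)) * u j) * Ψ j := by
        refine (Finset.sum_erase _ ?_).symm
        have hzero : Ψ d = 0 := by rw [hΨ, hKd, hTKd]; ring
        rw [hzero, mul_zero]
    _ = ∑ ℓ ∈ s0.erase d, C (u ℓ * ((ℓ:ℝ) - (d:ℝ)) / ((n:ℝ) - (d:ℝ))) * xkraw1 d ℓ p a := by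
        refine Finset.sum_congr rfl fun ℓ hℓ => ?_
        have hℓd : ((ℓ:ℝ) - (d:ℝ)) ≠ 0 := by
          have : ℓ ≠ d := (Finset.mem_erase.mp hℓ).1
          exact sub_ne_zero.mpr (by exact_mod_cast this)
        have hnd' : ((n:ℝ) - (d:ℝ)) ≠ 0 := sub_ne_zero.mpr (by exact_mod_cast hnd)
        rw [hxk, ← mul_assoc, ← C_mul]
        have hAB : u ℓ * ((ℓ:ℝ) - (d:ℝ)) / ((n:ℝ) - (d:ℝ)) * (1 / ((ℓ:ℝ) - (d:ℝ)))
            = 1 / ((n:ℝ) - (d:ℝ)) * u ℓ := by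
          field_simp
        rw [hAB]
end
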